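/- arXiv:1707.08281 — 6 statements merged into one kernel-verified Lean document; each statement's English description precedes it below -/
import Mathlib

section
/- Let k ≥ 1 be an integer and let ξ ∈ 𝔤 satisfy [Ω_+, ξ] = 0 and [W_0, ξ] = 2k ξ. Set ξ_l = (1/l!) ad(Ω_−)^l(ξ) for l ≥ 0, and suppose c(ξ_l) = (−1)^l ξ_{2k − l} for 0 ≤ l ≤ 2k. Define X = ξ_{k−1} if k is odd and X = i ξ_{k−1} if k is even, and Y = iX. Then T(X) = k(k+1) X and T(Y) = 0, where T : 𝔤 → 𝔤 is the ℝ-linear operator T(Z) = ½[Ω_+, [Ω_−, Z]] + ½[Ω_+, [Ω_+, c(Z)]]. -/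
/-!
For the `sl₂`-triple, `ξ` is a highest weight vector of weight `2k`, so its divided powers satisfy
`[Ω₋, ξ_l] = (l + 1) ξ_{l+1}` and `[Ω₊, ξ_{l+1}] = (2k - l) ξ_l`. Hence both `[Ω₊, [Ω₋, ξ_{k-1}]]`
and `[Ω₊, [Ω₊, ξ_{k+1}]]` equal `k(k+1) ξ_{k-1}`. As `c ξ_{k-1} = (-1)^(k-1) ξ_{k+1}` and `c` is
antilinear, `T (z ξ_{k-1}) = ½ (z + (-1)^(k-1) z̄) k(k+1) ξ_{k-1}`, and the factor
`½ (z + (-1)^(k-1) z̄)` is `1` for `z` the coefficient of `X` and `0` for that of `Y = iX`.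
-/

noncomputable section

def adPow {𝔤 : Type*} [LieRing 𝔤] [LieAlgebra ℂ 𝔤] (Y : 𝔤) (l : ℕ) (X : 𝔤) : 𝔤 :=
  ((LieAlgebra.ad ℂ 𝔤 Y) ^ l) X

/-- The descendants `ξ_l = (1/l!) ad(Ω₋)^l ξ` of a highest weight vector `ξ`. -/
def xiVec {𝔤 : Type*} [LieRing 𝔤] [LieAlgebra ℂ 𝔤] (Ωm : 𝔤) (ξ : 𝔤) (l : ℕ) : 𝔤 :=
  ((l.factorial : ℂ))⁻¹ • adPow Ωm l ξ

/-- The eigenspace `V_n` of `ad(W₀)` with eigenvalue `n`. -/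
def Vspace {𝔤 : Type*} [LieRing 𝔤] [LieAlgebra ℂ 𝔤] (W₀ : 𝔤) (n : ℤ) : Submodule ℂ 𝔤 :=
  Module.End.eigenspace (LieAlgebra.ad ℂ 𝔤 W₀) (n : ℂ)

open LieModule

section LieModule

variable {R L M : Type*} [CommRing R] [LieRing L] [LieAlgebra R L]
  [AddCommGroup M] [Module R M] [LieRingModule L M] [LieModule R L M]

theorem lie_toEnd_pow_apply_of_lie_eq_smul {h f : L} {m : M} {μ : R}
    (hf : ⁅h, f⁆ = (-2 : R) • f) (hm : ⁅h, m⁆ = μ • m) (n : ℕ) :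
    ⁅h, (toEnd R L M f ^ n) m⁆ = (μ - 2 * n) • (toEnd R L M f ^ n) m := by
  induction n with
  | zero => simpa using hm
  | succ n ih =>
    rw [pow_succ', Module.End.mul_apply, toEnd_apply_apply, leibniz_lie, hf, ih, smul_lie,
      lie_smul, ← add_smul]
    push_cast
    congr 1
    ring

structure IsHighestWeightVector (h e f : L) (m : M) (μ : R) : Prop where
  lie_e_f : ⁅e, f⁆ = h
  lie_h_f : ⁅h, f⁆ = (-2 : R) • f
  lie_e : ⁅e, m⁆ = 0
  lie_h : ⁅h, m⁆ = μ • m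

namespace IsHighestWeightVector

theorem lie_e_toEnd_f_pow_succ {h e f : L} {m : M} {μ : R}
    (P : IsHighestWeightVector h e f m μ) (n : ℕ) :
    ⁅e, (toEnd R L M f ^ (n + 1)) m⁆ = ((n + 1) * (μ - n)) • (toEnd R L M f ^ n) m := by
  induction n with
  | zero => simp [leibniz_lie e, P.lie_e_f, P.lie_e, P.lie_h]
  | succ n ih =>
    rw [pow_succ', Module.End.mul_apply, toEnd_apply_apply, leibniz_lie, P.lie_e_f,
      lie_toEnd_pow_apply_of_lie_eq_smul P.lie_h_f P.lie_h, ih, lie_smul, ← toEnd_apply_apply R,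
      ← Module.End.mul_apply, ← pow_succ', ← add_smul]
    push_cast
    congr 1
    ring

end IsHighestWeightVector

end LieModule

section DividedPowers

variable {𝔤 : Type*} [LieRing 𝔤] [LieAlgebra ℂ 𝔤]

theorem adPow_eq_toEnd_pow_apply (f ξ : 𝔤) (l : ℕ) : adPow f l ξ = (toEnd ℂ 𝔤 𝔤 f ^ l) ξ :=
  rfl

theorem lie_xiVec (f ξ : 𝔤) (l : ℕ) : ⁅f, xiVec f ξ l⁆ = ((l : ℂ) + 1) • xiVec f ξ (l + 1) := by
  have hl : ((l : ℂ) + 1) ≠ 0 := by exact_mod_cast l.succ_ne_zero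
  simp only [xiVec, adPow_eq_toEnd_pow_apply, lie_smul, smul_smul, pow_succ',
    Module.End.mul_apply, toEnd_apply_apply, Nat.factorial_succ]
  congr 1
  push_cast
  field_simp

namespace IsHighestWeightVector

variable {h e f ξ : 𝔤} {μ : ℂ}

theorem lie_e_xiVec_succ (P : IsHighestWeightVector h e f ξ μ) (l : ℕ) :
    ⁅e, xiVec f ξ (l + 1)⁆ = (μ - l) • xiVec f ξ l := by
  have hl : ((l : ℂ) + 1) ≠ 0 := by exact_mod_cast l.succ_ne_zero
  simp only [xiVec, adPow_eq_toEnd_pow_apply, lie_smul, P.lie_e_toEnd_f_pow_succ, smul_smul,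
    Nat.factorial_succ]
  congr 1
  push_cast
  field_simp

theorem lie_e_lie_f_xiVec (P : IsHighestWeightVector h e f ξ μ) (l : ℕ) :
    ⁅e, ⁅f, xiVec f ξ l⁆⁆ = ((l + 1) * (μ - l)) • xiVec f ξ l := by
  rw [lie_xiVec, lie_smul, P.lie_e_xiVec_succ, smul_smul]

theorem lie_e_lie_e_xiVec (P : IsHighestWeightVector h e f ξ μ) (l : ℕ) :
    ⁅e, ⁅e, xiVec f ξ (l + 2)⁆⁆ = ((μ - (l + 1)) * (μ - l)) • xiVec f ξ l := by
  rw [P.lie_e_xiVec_succ, lie_smul, P.lie_e_xiVec_succ, smul_smul]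
  push_cast
  rfl

end IsHighestWeightVector

end DividedPowers

theorem T_eigenvectors_general
    (𝔤 : Type*) [LieRing 𝔤] [LieAlgebra ℂ 𝔤]
    (c : 𝔤 → 𝔤)
    (hc_smul : ∀ (z : ℂ) (X : 𝔤), c (z • X) = (starRingEnd ℂ z) • c X)
    (W₀ Ωp Ωm : 𝔤)
    (hW0m : ⁅W₀, Ωm⁆ = (-2 : ℂ) • Ωm)
    (hpm : ⁅Ωp, Ωm⁆ = W₀)
    (k : ℕ) (hk : 1 ≤ k) (ξ : 𝔤)
    (hhw1 : ⁅Ωp, ξ⁆ = 0) (hhw2 : ⁅W₀, ξ⁆ = ((2 * k : ℕ) : ℂ) • ξ)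
    (hconj : ∀ l ≤ 2 * k, c (xiVec Ωm ξ l) = ((-1 : ℂ)) ^ l • xiVec Ωm ξ (2 * k - l))
    (X Y : 𝔤)
    (hX : X = if Odd k then xiVec Ωm ξ (k - 1) else Complex.I • xiVec Ωm ξ (k - 1))
    (hY : Y = Complex.I • X)
    (T : 𝔤 → 𝔤)
    (hT : T = fun Z => ((2 : ℂ))⁻¹ • ⁅Ωp, ⁅Ωm, Z⁆⁆ + ((2 : ℂ))⁻¹ • ⁅Ωp, ⁅Ωp, c Z⁆⁆) :
    T X = ((k * (k + 1) : ℕ) : ℂ) • X ∧ T Y = 0 := by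
  obtain ⟨m, rfl⟩ : ∃ m, k = m + 1 := ⟨k - 1, by omega⟩
  have P : IsHighestWeightVector W₀ Ωp Ωm ξ ((2 * (m + 1) : ℕ) : ℂ) := ⟨hpm, hW0m, hhw1, hhw2⟩
  set A := xiVec Ωm ξ m
  have hdown : ⁅Ωp, ⁅Ωm, A⁆⁆ = ((m + 1) * (m + 2) : ℂ) • A := by
    rw [P.lie_e_lie_f_xiVec]; congr 1; push_cast; ring
  have hup : ⁅Ωp, ⁅Ωp, xiVec Ωm ξ (m + 2)⁆⁆ = ((m + 1) * (m + 2) : ℂ) • A := by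
    rw [P.lie_e_lie_e_xiVec]; congr 1; push_cast; ring
  have hcA : c A = (-1 : ℂ) ^ m • xiVec Ωm ξ (m + 2) := by
    simpa [show 2 * (m + 1) - m = m + 2 by omega] using hconj m (by omega)
  have hTA : ∀ z : ℂ,
      T (z • A) = (2⁻¹ * (z + starRingEnd ℂ z * (-1) ^ m) * ((m + 1) * (m + 2))) • A := by
    intro z
    simp only [hT, lie_smul, hdown, hc_smul, hcA, hup, smul_smul]
    match_scalars
    ring
  rcases Nat.even_or_odd m with hm | hm
  · have hXA : X = (1 : ℂ) • A := by simp [hX, Even.add_one hm, A]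
    simp only [hY, hXA, smul_smul, hTA, Even.neg_one_pow hm]
    exact ⟨by match_scalars; simp; ring, by match_scalars; simp⟩
  · have hXA : X = Complex.I • A := by simp [hX, Nat.odd_add_one, hm, A]
    simp only [hY, hXA, smul_smul, hTA, Odd.neg_one_pow hm]
    exact ⟨by match_scalars; simp; ring, by match_scalars; simp⟩

/-- the vectors X (from a highest weight vector of weight 2k) and Y = iX are
eigenvectors of the operator T(Z) = ½[Ω₊,[Ω₋,Z]] + ½[Ω₊,[Ω₊,c(Z)]], with eigenvalues
k(k+1) and 0 respectively. -/
theorem T_eigenvectors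
    (𝔤 : Type*) [LieRing 𝔤] [LieAlgebra ℂ 𝔤] [FiniteDimensional ℂ 𝔤]
    [LieAlgebra.IsSemisimple ℂ 𝔤]
    (c : 𝔤 → 𝔤)
    (hc_add : ∀ X Y : 𝔤, c (X + Y) = c X + c Y)
    (hc_smul : ∀ (z : ℂ) (X : 𝔤), c (z • X) = (starRingEnd ℂ z) • c X)
    (hc_lie : ∀ X Y : 𝔤, c ⁅X, Y⁆ = ⁅c X, c Y⁆)
    (hc_invol : ∀ X : 𝔤, c (c X) = X)
    (B : 𝔤 →ₗ[ℂ] 𝔤 →ₗ[ℂ] ℂ)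
    (hB_symm : ∀ X Y : 𝔤, B X Y = B Y X)
    (hB_inv : ∀ X Y Z : 𝔤, B ⁅X, Y⁆ Z = B X ⁅Y, Z⁆)
    (hB_pos : ∀ X : 𝔤, X ≠ 0 → 0 < (-(B (c X) X)).re ∧ (B (c X) X).im = 0)
    (W₀ Ωp Ωm : 𝔤)
    (hW0p : ⁅W₀, Ωp⁆ = (2 : ℂ) • Ωp)
    (hW0m : ⁅W₀, Ωm⁆ = (-2 : ℂ) • Ωm)
    (hpm : ⁅Ωp, Ωm⁆ = W₀)
    (hcΩ : c Ωp = -Ωm)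
    (k : ℕ) (hk : 1 ≤ k) (ξ : 𝔤)
    (hhw1 : ⁅Ωp, ξ⁆ = 0) (hhw2 : ⁅W₀, ξ⁆ = ((2 * k : ℕ) : ℂ) • ξ)
    (hconj : ∀ l ≤ 2 * k, c (xiVec Ωm ξ l) = ((-1 : ℂ)) ^ l • xiVec Ωm ξ (2 * k - l))
    (X Y : 𝔤)
    (hX : X = if Odd k then xiVec Ωm ξ (k - 1) else Complex.I • xiVec Ωm ξ (k - 1))
    (hY : Y = Complex.I • X)
    (T : 𝔤 → 𝔤)
    (hT : T = fun Z => ((2 : ℂ))⁻¹ • ⁅Ωp, ⁅Ωm, Z⁆⁆ + ((2 : ℂ))⁻¹ • ⁅Ωp, ⁅Ωp, c Z⁆⁆) :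
    T X = ((k * (k + 1) : ℕ) : ℂ) • X ∧ T Y = 0 :=
  T_eigenvectors_general 𝔤 c hc_smul W₀ Ωp Ωm hW0m hpm k hk ξ hhw1 hhw2 hconj X Y hX hY T hT
end
end

section
/- For every X ∈ V_2 and every l ∈ {1, …, I}: X ∈ ⊕_{q=1}^{l} (E^q_0 ⊕ E^q_+) if and only if ad(Ω_+)^{κ_l + 2}(c(X)) = 0. -/
noncomputable section

/-- The vector `X^{(j)} = ξ^j_{k_j−1}` (multiplied by `i` when `k_j` is even). -/
def Xv {𝔤 : Type*} [LieRing 𝔤] [LieAlgebra ℂ 𝔤] (Ωm : 𝔤) {N : ℕ}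
    (k : Fin N → ℕ) (ξ : Fin N → 𝔤) (j : Fin N) : 𝔤 :=
  if Odd (k j) then xiVec Ωm (ξ j) (k j - 1) else Complex.I • xiVec Ωm (ξ j) (k j - 1)

/-- The vector `Y^{(j)} = i X^{(j)}`. -/
def Yv {𝔤 : Type*} [LieRing 𝔤] [LieAlgebra ℂ 𝔤] (Ωm : 𝔤) {N : ℕ}
    (k : Fin N → ℕ) (ξ : Fin N → 𝔤) (j : Fin N) : 𝔤 :=
  Complex.I • Xv Ωm k ξ j

/-- `E^l_+` : the real span of the vectors `X^{(j)}` with `k_j = κ_l`. -/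
def Eplus {𝔤 : Type*} [LieRing 𝔤] [LieAlgebra ℂ 𝔤] (Ωm : 𝔤) {N I : ℕ}
    (k : Fin N → ℕ) (ξ : Fin N → 𝔤) (κ : Fin I → ℕ) (l : Fin I) : Submodule ℝ 𝔤 :=
  Submodule.span ℝ (Xv Ωm k ξ '' {j | k j = κ l})

/-- `E^l_0` : the real span of the vectors `Y^{(j)}` with `k_j = κ_l`. -/
def Ezero {𝔤 : Type*} [LieRing 𝔤] [LieAlgebra ℂ 𝔤] (Ωm : 𝔤) {N I : ℕ}
    (k : Fin N → ℕ) (ξ : Fin N → 𝔤) (κ : Fin I → ℕ) (l : Fin I) : Submodule ℝ 𝔤 :=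
  Submodule.span ℝ (Yv Ωm k ξ '' {j | k j = κ l})

/-- The (direct) sum `⊕_{q=1}^{l} (E^q_0 ⊕ E^q_+)`. -/
def Dsum {𝔤 : Type*} [LieRing 𝔤] [LieAlgebra ℂ 𝔤] (Ωm : 𝔤) {N I : ℕ}
    (k : Fin N → ℕ) (ξ : Fin N → 𝔤) (κ : Fin I → ℕ) (l : Fin I) : Submodule ℝ 𝔤 :=
  ⨆ q : Fin I, ⨆ _ : q ≤ l, (Ezero Ωm k ξ κ q ⊔ Eplus Ωm k ξ κ q)


/-!
`V₂` has the basis `ζⱼ = ξʲ_{kⱼ-1}`, and `c ζⱼ = ± ξʲ_{kⱼ+1}`. Inside the irreducible module of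
highest weight `2kⱼ`, `ad(Ω₊)^r` kills `ξʲ_{kⱼ+1}` exactly when `r > kⱼ + 1`; as these modules are
independent, `ad(Ω₊)^{κₗ+2} (c X) = 0` says precisely that `X` has no `ζⱼ`-component with
`kⱼ > κₗ`. On the other side, each `X^q_s` is some `ζⱼ` up to a unit and `Y^q_s = i X^q_s`, so
`E^q₀ ⊕ E^q₊` is the complex span of the `ζⱼ` with `kⱼ = κ_q`, and the sum over `q ≤ l` is the
complex span of the `ζⱼ` with `kⱼ ≤ κₗ`.
-/

namespace IsSl2Triple

variable {R L M : Type*} [CommRing R] [LieRing L] [LieAlgebra R L]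
  [AddCommGroup M] [Module R M] [LieRingModule L M] [LieModule R L M]
  {h e f : L}

lemma of_lie_eq_smul (hh : h ≠ 0) (he : ⁅h, e⁆ = (2 : R) • e) (hf : ⁅h, f⁆ = (-2 : R) • f)
    (hef : ⁅e, f⁆ = h) : IsSl2Triple h e f :=
  ⟨hh, hef, by rw [he, two_smul, two_nsmul], by rw [hf, neg_smul, two_smul, two_nsmul]⟩

namespace HasPrimitiveVectorWith

open LieModule Finset

variable {t : IsSl2Triple h e f} {m : M} {μ : R}

lemma pow_toEnd_e_pow_toEnd_f (P : t.HasPrimitiveVectorWith m μ) (n r : ℕ) :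
    (toEnd R L M e ^ r) ((toEnd R L M f ^ (n + r)) m) =
      (∏ i ∈ range r, ((n + i + 1 : R) * (μ - (n + i)))) • (toEnd R L M f ^ n) m := by
  induction r with
  | zero => simp
  | succ r ih =>
    rw [pow_succ, Module.End.mul_apply, ← add_assoc, toEnd_apply_apply,
      P.lie_e_pow_succ_toEnd_f, map_smul, ih, smul_smul, prod_range_succ, mul_comm]
    push_cast
    rfl

lemma pow_toEnd_e_pow_toEnd_f_self (P : t.HasPrimitiveVectorWith m μ) (n : ℕ) :
    (toEnd R L M e ^ n) ((toEnd R L M f ^ n) m) =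
      (∏ i ∈ range n, ((i + 1 : R) * (μ - i))) • m := by
  simpa using P.pow_toEnd_e_pow_toEnd_f 0 n

lemma pow_toEnd_e_pow_toEnd_f_eq_zero (P : t.HasPrimitiveVectorWith m μ) {n r : ℕ} (h : n < r) :
    (toEnd R L M e ^ r) ((toEnd R L M f ^ n) m) = 0 := by
  obtain ⟨s, rfl⟩ : ∃ s, r = s + (n + 1) := ⟨r - (n + 1), by omega⟩
  rw [pow_add, Module.End.mul_apply, pow_succ', Module.End.mul_apply,
    P.pow_toEnd_e_pow_toEnd_f_self, map_smul, toEnd_apply_apply, P.lie_e, smul_zero, map_zero]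

lemma pow_toEnd_e_pow_toEnd_f_mem_span (P : t.HasPrimitiveVectorWith m μ) (n r : ℕ) :
    (toEnd R L M e ^ r) ((toEnd R L M f ^ n) m) ∈
      Submodule.span R (Set.range fun i => (toEnd R L M f ^ i) m) := by
  rcases lt_or_ge n r with h | h
  · rw [P.pow_toEnd_e_pow_toEnd_f_eq_zero h]
    exact zero_mem _
  · obtain ⟨n', rfl⟩ := Nat.exists_eq_add_of_le' h
    rw [P.pow_toEnd_e_pow_toEnd_f]
    exact Submodule.smul_mem _ _ (Submodule.subset_span ⟨n', rfl⟩)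

variable [IsDomain R] [CharZero R] [Module.IsTorsionFree R M]

lemma pow_toEnd_e_pow_toEnd_f_ne_zero (P : t.HasPrimitiveVectorWith m μ) {n₀ n r : ℕ}
    (hμ : μ = n₀) (hn : n ≤ n₀) (hr : r ≤ n) :
    (toEnd R L M e ^ r) ((toEnd R L M f ^ n) m) ≠ 0 := by
  have hcoeff : ∏ i ∈ range n, ((i + 1 : R) * (μ - i)) ≠ 0 := by
    refine prod_ne_zero_iff.mpr fun i hi => mul_ne_zero (Nat.cast_add_one_ne_zero i) ?_
    rw [hμ, sub_ne_zero, Nat.cast_inj.ne]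
    have := mem_range.mp hi
    omega
  intro hzero
  have hself := P.pow_toEnd_e_pow_toEnd_f_self n
  rw [← Nat.sub_add_cancel hr, pow_add, Module.End.mul_apply, Nat.sub_add_cancel hr, hzero,
    map_zero, eq_comm, smul_eq_zero_iff_right hcoeff] at hself
  exact P.ne_zero hself

lemma pow_toEnd_e_pow_toEnd_f_eq_zero_iff (P : t.HasPrimitiveVectorWith m μ) {n₀ n r : ℕ}
    (hμ : μ = n₀) (hn : n ≤ n₀) :
    (toEnd R L M e ^ r) ((toEnd R L M f ^ n) m) = 0 ↔ n < r :=
  ⟨fun h => not_le.mp fun hr => P.pow_toEnd_e_pow_toEnd_f_ne_zero hμ hn hr h,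
    P.pow_toEnd_e_pow_toEnd_f_eq_zero⟩

end HasPrimitiveVectorWith

end IsSl2Triple

namespace Submodule

open Set Pointwise

lemma span_image_smul_of_isUnit {K M ι : Type*} [Semiring K] [AddCommMonoid M] [Module K M]
    {a : ι → K} (ha : ∀ i, IsUnit (a i)) (v : ι → M) (s : Set ι) :
    span K ((fun i => a i • v i) '' s) = span K (v '' s) := by
  rw [span_eq_iSup_of_singleton_spans, span_eq_iSup_of_singleton_spans, iSup_image, iSup_image]
  simp only [span_singleton_smul_eq (ha _)]

lemma span_I_smul_sup_span {M : Type*} [AddCommGroup M] [Module ℂ M] (T : Set M) :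
    span ℝ (Complex.I • T) ⊔ span ℝ T = (span ℂ T).restrictScalars ℝ := by
  rw [← span_union, ← span_smul_of_span_eq_top (RCLike.span_one_I (K := ℂ)), insert_eq, union_smul, Set.singleton_smul, Set.singleton_smul, one_smul, union_comm]
  rfl

lemma mem_span_image_iff_apply_eq_zero {K M M' ι : Type*} [Field K] [AddCommGroup M] [Module K M]
    [AddCommGroup M'] [Module K M'] [Fintype ι] {σ : K →+* K} (F : M →ₛₗ[σ] M')
    {v : ι → M} {p : ι → Submodule K M'} (hp : iSupIndep p) (hFv : ∀ i, F (v i) ∈ p i)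
    {s : Set ι} (hs : ∀ i, F (v i) = 0 ↔ i ∈ s) {x : M} (hx : x ∈ span K (range v)) :
    x ∈ span K (v '' s) ↔ F x = 0 := by
  refine ⟨fun hxs => (span_le (p := LinearMap.ker F)).mpr ?_ hxs, fun hFx => ?_⟩
  · rintro _ ⟨i, hi, rfl⟩
    exact (hs i).mpr hi
  obtain ⟨a, rfl⟩ := (mem_span_range_iff_exists_fun K).mp hx
  have hterm (i : ι) : σ (a i) • F (v i) = 0 :=
    (iSupIndep_iff_finsetSum_eq_zero_imp_eq_zero p).mp hp Finset.univ
      (fun j => σ (a j) • F (v j)) (fun j _ => smul_mem _ _ (hFv j)) (by simpa using hFx)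
      i (Finset.mem_univ i)
  refine sum_mem fun i _ => ?_
  by_cases hi : i ∈ s
  · exact smul_mem _ _ (subset_span (mem_image_of_mem v hi))
  · have hai : a i = 0 := by simpa [(hs i).not.mpr hi] using hterm i
    simp [hai]

end Submodule

section

open Submodule Set Pointwise

variable {𝔤 : Type*} [LieRing 𝔤] [LieAlgebra ℂ 𝔤]

lemma span_image_Xv (Ωm : 𝔤) {N : ℕ} (k : Fin N → ℕ) (ξ : Fin N → 𝔤) (s : Set (Fin N)) :
    span ℂ (Xv Ωm k ξ '' s) = span ℂ ((fun j => xiVec Ωm (ξ j) (k j - 1)) '' s) := by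
  have hXv : Xv Ωm k ξ =
      fun j => (if Odd (k j) then 1 else Complex.I) • xiVec Ωm (ξ j) (k j - 1) := by
    funext j
    unfold Xv
    split_ifs <;> simp
  rw [hXv]
  exact span_image_smul_of_isUnit (fun j => by split_ifs <;> simp) _ s

lemma Ezero_sup_Eplus (Ωm : 𝔤) {N I : ℕ} (k : Fin N → ℕ) (ξ : Fin N → 𝔤) (κ : Fin I → ℕ)
    (q : Fin I) :
    Ezero Ωm k ξ κ q ⊔ Eplus Ωm k ξ κ q =
      (span ℂ (Xv Ωm k ξ '' {j | k j = κ q})).restrictScalars ℝ := by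
  rw [Ezero, Eplus, ← span_I_smul_sup_span, ← image_smul, image_image]
  rfl

lemma Dsum_eq (Ωm : 𝔤) {N I : ℕ} {k : Fin N → ℕ} (ξ : Fin N → 𝔤) {κ : Fin I → ℕ}
    (hκ : StrictMono κ) (hkκ : ∀ j, ∃ q, k j = κ q) (l : Fin I) :
    Dsum Ωm k ξ κ l = (span ℂ (Xv Ωm k ξ '' {j | k j ≤ κ l})).restrictScalars ℝ := by
  have hS : {j | k j ≤ κ l} = ⋃ q, ⋃ (_ : q ≤ l), {j | k j = κ q} := by
    ext j
    simp only [mem_ofPred_eq, mem_iUnion, exists_prop]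
    constructor
    · intro hj
      obtain ⟨q, hq⟩ := hkκ j
      exact ⟨q, hκ.le_iff_le.mp (hq ▸ hj), hq⟩
    · rintro ⟨q, hql, hq⟩
      exact hq ▸ hκ.monotone hql
  simp only [Dsum, Ezero_sup_Eplus, ← restrictScalars_iSup, hS, image_iUnion, span_iUnion]

lemma span_range_xiVec (Ωm ξ : 𝔤) :
    span ℂ (range (xiVec Ωm ξ)) = span ℂ (range fun i => adPow Ωm i ξ) := by
  rw [← image_univ, ← image_univ]
  exact span_image_smul_of_isUnit (fun i => by simp [Nat.factorial_ne_zero]) _ _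

variable {W₀ Ωp Ωm : 𝔤} {t : IsSl2Triple W₀ Ωp Ωm} {ξ : 𝔤} {μ : ℂ}

lemma adPow_xiVec_mem_span (P : t.HasPrimitiveVectorWith ξ μ) (r n : ℕ) :
    adPow Ωp r (xiVec Ωm ξ n) ∈ span ℂ (range (xiVec Ωm ξ)) := by
  rw [span_range_xiVec, xiVec, adPow, map_smul]
  exact smul_mem _ _ (P.pow_toEnd_e_pow_toEnd_f_mem_span n r)

lemma adPow_xiVec_eq_zero_iff (P : t.HasPrimitiveVectorWith ξ μ) {n₀ n r : ℕ} (hμ : μ = n₀)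
    (hn : n ≤ n₀) : adPow Ωp r (xiVec Ωm ξ n) = 0 ↔ n < r := by
  rw [xiVec, adPow, map_smul, smul_eq_zero_iff_right (by simp [Nat.factorial_ne_zero])]
  exact P.pow_toEnd_e_pow_toEnd_f_eq_zero_iff hμ hn

end

theorem mem_Dsum_iff_adPow_conj_eq_zero_general
    (𝔤 : Type*) [LieRing 𝔤] [LieAlgebra ℂ 𝔤]
    (c : 𝔤 → 𝔤)
    (hc_add : ∀ X Y : 𝔤, c (X + Y) = c X + c Y)
    (hc_smul : ∀ (z : ℂ) (X : 𝔤), c (z • X) = (starRingEnd ℂ z) • c X)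
    (W₀ Ωp Ωm : 𝔤)
    (hW0p : ⁅W₀, Ωp⁆ = (2 : ℂ) • Ωp)
    (hW0m : ⁅W₀, Ωm⁆ = (-2 : ℂ) • Ωm)
    (hpm : ⁅Ωp, Ωm⁆ = W₀)
    (N : ℕ) (k : Fin (N + 1) → ℕ) (ξ : Fin (N + 1) → 𝔤)
    (hk0 : k 0 = 1) (hkmono : Monotone k)
    (hhw : ∀ j, ⁅Ωp, ξ j⁆ = 0 ∧ ⁅W₀, ξ j⁆ = ((2 * k j : ℕ) : ℂ) • ξ j)
    (hindep : iSupIndep fun j => Submodule.span ℂ (Set.range fun l => xiVec Ωm (ξ j) l))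
    (hconj : ∀ j, ∀ l ≤ 2 * k j,
      c (xiVec Ωm (ξ j) l) = ((-1 : ℂ)) ^ l • xiVec Ωm (ξ j) (2 * k j - l))
    (hbasisli : LinearIndependent ℂ fun j => xiVec Ωm (ξ j) (k j - 1))
    (hbasissp : Submodule.span ℂ (Set.range fun j => xiVec Ωm (ξ j) (k j - 1)) = Vspace W₀ 2)
    (I : ℕ) (κ : Fin (I + 1) → ℕ) (hκ : StrictMono κ)
    (hkκ : ∀ j, ∃ l, k j = κ l)
    :
    ∀ X : 𝔤, X ∈ Vspace W₀ 2 → ∀ l : Fin (I + 1),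
      (X ∈ Dsum Ωm k ξ κ l ↔ adPow Ωp (κ l + 2) (c X) = 0) := by
  intro X hX l
  have hk_pos (j) : 1 ≤ k j := hk0 ▸ hkmono (Fin.zero_le j)
  have hξ (j) : ξ j ≠ 0 := fun hξj => hbasisli.ne_zero j (by simp [xiVec, adPow, hξj])
  have hW₀ : W₀ ≠ 0 := by
    rintro rfl
    have h := (hhw 0).2
    rw [zero_lie, hk0, eq_comm, smul_eq_zero] at h
    exact h.elim (by norm_num) (hξ 0)
  have t : IsSl2Triple W₀ Ωp Ωm := .of_lie_eq_smul (R := ℂ) hW₀ hW0p hW0m hpm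
  have P (j) : t.HasPrimitiveVectorWith (ξ j) ((2 * k j : ℕ) : ℂ) := ⟨hξ j, (hhw j).2, (hhw j).1⟩
  let F : 𝔤 →ₗ⋆[ℂ] 𝔤 := (LieAlgebra.ad ℂ 𝔤 Ωp ^ (κ l + 2)).comp ⟨⟨c, hc_add⟩, hc_smul⟩
  have hF (j) : F (xiVec Ωm (ξ j) (k j - 1)) =
      (-1 : ℂ) ^ (k j - 1) • adPow Ωp (κ l + 2) (xiVec Ωm (ξ j) (k j + 1)) := by
    have hconj_j : c (xiVec Ωm (ξ j) (k j - 1)) =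
        (-1 : ℂ) ^ (k j - 1) • xiVec Ωm (ξ j) (k j + 1) := by
      rw [hconj j _ (by omega)]
      congr 2
      have := hk_pos j
      omega
    change adPow Ωp (κ l + 2) (c _) = _
    rw [hconj_j, adPow, adPow, map_smul]
  rw [Dsum_eq Ωm ξ hκ hkκ, Submodule.restrictScalars_mem, span_image_Xv]
  rw [← hbasissp] at hX
  refine Submodule.mem_span_image_iff_apply_eq_zero F hindep (fun j => ?_) (fun j => ?_) hX
  · rw [hF]
    exact Submodule.smul_mem _ _ (adPow_xiVec_mem_span (P j) _ _)
  · rw [hF, smul_eq_zero_iff_right (by simp), adPow_xiVec_eq_zero_iff (P j) rfl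
      (by have := hk_pos j; omega), Set.mem_ofPred_eq]
    omega

/-- Lemma 4: for X ∈ V₂, X lies in ⊕_{q=1}^{l} (E^q₀ ⊕ E^q₊) iff
ad(Ω₊)^{κ_l + 2}(c(X)) = 0. -/
theorem mem_Dsum_iff_adPow_conj_eq_zero
    (𝔤 : Type*) [LieRing 𝔤] [LieAlgebra ℂ 𝔤] [FiniteDimensional ℂ 𝔤]
    [LieAlgebra.IsSemisimple ℂ 𝔤]
    (c : 𝔤 → 𝔤)
    (hc_add : ∀ X Y : 𝔤, c (X + Y) = c X + c Y)
    (hc_smul : ∀ (z : ℂ) (X : 𝔤), c (z • X) = (starRingEnd ℂ z) • c X)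
    (hc_lie : ∀ X Y : 𝔤, c ⁅X, Y⁆ = ⁅c X, c Y⁆)
    (hc_invol : ∀ X : 𝔤, c (c X) = X)
    (B : 𝔤 →ₗ[ℂ] 𝔤 →ₗ[ℂ] ℂ)
    (hB_symm : ∀ X Y : 𝔤, B X Y = B Y X)
    (hB_inv : ∀ X Y Z : 𝔤, B ⁅X, Y⁆ Z = B X ⁅Y, Z⁆)
    (hB_pos : ∀ X : 𝔤, X ≠ 0 → 0 < (-(B (c X) X)).re ∧ (B (c X) X).im = 0)
    (W₀ Ωp Ωm : 𝔤)
    (hW0p : ⁅W₀, Ωp⁆ = (2 : ℂ) • Ωp)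
    (hW0m : ⁅W₀, Ωm⁆ = (-2 : ℂ) • Ωm)
    (hpm : ⁅Ωp, Ωm⁆ = W₀)
    (hcΩ : c Ωp = -Ωm)
    (N : ℕ) (k : Fin (N + 1) → ℕ) (ξ : Fin (N + 1) → 𝔤)
    (hk0 : k 0 = 1) (hkmono : Monotone k)
    (hhw : ∀ j, ⁅Ωp, ξ j⁆ = 0 ∧ ⁅W₀, ξ j⁆ = ((2 * k j : ℕ) : ℂ) • ξ j)
    (hindep : iSupIndep fun j => Submodule.span ℂ (Set.range fun l => xiVec Ωm (ξ j) l))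
    (hconj : ∀ j, ∀ l ≤ 2 * k j,
      c (xiVec Ωm (ξ j) l) = ((-1 : ℂ)) ^ l • xiVec Ωm (ξ j) (2 * k j - l))
    (hbasisli : LinearIndependent ℂ fun j => xiVec Ωm (ξ j) (k j - 1))
    (hbasissp : Submodule.span ℂ (Set.range fun j => xiVec Ωm (ξ j) (k j - 1)) = Vspace W₀ 2)
    (I : ℕ) (κ : Fin (I + 1) → ℕ) (hκ : StrictMono κ)
    (hkκ : ∀ j, ∃ l, k j = κ l) (hκk : ∀ l, ∃ j, k j = κ l)
    :
    ∀ X : 𝔤, X ∈ Vspace W₀ 2 → ∀ l : Fin (I + 1),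
      (X ∈ Dsum Ωm k ξ κ l ↔ adPow Ωp (κ l + 2) (c X) = 0) :=
  mem_Dsum_iff_adPow_conj_eq_zero_general 𝔤 c hc_add hc_smul W₀ Ωp Ωm hW0p hW0m hpm N k ξ hk0 hkmono
    hhw hindep hconj hbasisli hbasissp I κ hκ hkκ
end
end

section
/- Let X ∈ V_2 and let s ≥ 0 and p ≥ 0 be integers with p̃ < I and κ_{p̃} + s < κ_{p̃ + 1}. If ad(Ω_+)^{κ_{p̃} + s}(X) = 0, then ad(Ω_+)^{κ_{p̃}}(X) = 0. -/
/-!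
Write `X = ∑ⱼ cⱼ ξʲ_{kⱼ-1}` in the basis of `V₂`. On the string of `ξʲ`, `ad(Ω₊)` lowers the index
by one and multiplies by `2kⱼ - l`, so `ad(Ω₊)^m ξʲ_{kⱼ-1}` is a nonzero multiple of `ξʲ_{kⱼ-1-m}`
for `m < kⱼ` and vanishes for `m ≥ kⱼ`. Since the strings are independent, `ad(Ω₊)^{κ_p̃+s} X = 0`
forces `cⱼ = 0` whenever `kⱼ > κ_p̃ + s`. As no `kⱼ` lies in `(κ_p̃, κ_p̃ + s]`, every remaining `j`
has `kⱼ ≤ κ_p̃`, and then `ad(Ω₊)^{κ_p̃}` kills `ξʲ_{kⱼ-1}`.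
-/

noncomputable section

open Finset

section AdPow

variable {𝔤 : Type*} [LieRing 𝔤] [LieAlgebra ℂ 𝔤]

lemma adPow_succ (Y : 𝔤) (m : ℕ) (X : 𝔤) : adPow Y (m + 1) X = adPow Y m ⁅Y, X⁆ := by
  simp [adPow, pow_succ, LieAlgebra.ad_apply]

lemma adPow_succ' (Y : 𝔤) (m : ℕ) (X : 𝔤) : adPow Y (m + 1) X = ⁅Y, adPow Y m X⁆ := by
  simp [adPow, pow_succ', LieAlgebra.ad_apply]

lemma adPow_add (Y : 𝔤) (a b : ℕ) (X : 𝔤) : adPow Y (a + b) X = adPow Y a (adPow Y b X) := by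
  simp [adPow, pow_add]

lemma adPow_smul (Y : 𝔤) (m : ℕ) (z : ℂ) (X : 𝔤) : adPow Y m (z • X) = z • adPow Y m X :=
  map_smul _ _ _

lemma adPow_sum_smul {ι : Type*} (s : Finset ι) (Y : 𝔤) (m : ℕ) (c : ι → ℂ) (v : ι → 𝔤) :
    adPow Y m (∑ i ∈ s, c i • v i) = ∑ i ∈ s, c i • adPow Y m (v i) := by
  simp [adPow, map_sum, map_smul]

lemma xiVec_zero (Ωm ξ : 𝔤) : xiVec Ωm ξ 0 = ξ := by
  simp [xiVec, adPow]

lemma xiVec_eq_zero_iff {Ωm ξ : 𝔤} {l : ℕ} : xiVec Ωm ξ l = 0 ↔ adPow Ωm l ξ = 0 := by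
  simp [xiVec, Nat.factorial_ne_zero]

lemma xiVec_ne_zero_of_le {Ωm ξ : 𝔤} {l n : ℕ} (h : xiVec Ωm ξ n ≠ 0) (hl : l ≤ n) :
    xiVec Ωm ξ l ≠ 0 := by
  rw [ne_eq, xiVec_eq_zero_iff] at h ⊢
  contrapose! h
  rw [← Nat.sub_add_cancel hl, adPow_add, h, adPow, map_zero]

end AdPow

section Sl2String

variable {𝔤 : Type*} [LieRing 𝔤] [LieAlgebra ℂ 𝔤] {W₀ Ωp Ωm ξ : 𝔤} {μ : ℂ}

lemma lie_adPow_of_lie_eq_smul (hW0m : ⁅W₀, Ωm⁆ = (-2 : ℂ) • Ωm) (hW : ⁅W₀, ξ⁆ = μ • ξ)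
    (l : ℕ) : ⁅W₀, adPow Ωm l ξ⁆ = (μ - 2 * l) • adPow Ωm l ξ := by
  induction l with
  | zero => simpa [adPow] using hW
  | succ l ih =>
    rw [adPow_succ', leibniz_lie, hW0m, ih, smul_lie, lie_smul, ← adPow_succ', ← add_smul]
    push_cast
    ring_nf

lemma lie_adPow_succ_of_primitive (hW0m : ⁅W₀, Ωm⁆ = (-2 : ℂ) • Ωm) (hpm : ⁅Ωp, Ωm⁆ = W₀)
    (hW : ⁅W₀, ξ⁆ = μ • ξ) (hp : ⁅Ωp, ξ⁆ = 0) (l : ℕ) :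
    ⁅Ωp, adPow Ωm (l + 1) ξ⁆ = ((l + 1) * (μ - l)) • adPow Ωm l ξ := by
  induction l with
  | zero => simp [adPow, leibniz_lie Ωp Ωm ξ, hpm, hW, hp]
  | succ l ih =>
    rw [adPow_succ' Ωm (l + 1), leibniz_lie, hpm, lie_adPow_of_lie_eq_smul hW0m hW, ih, lie_smul,
      ← adPow_succ', ← add_smul]
    push_cast
    ring_nf

lemma lie_xiVec_succ (hW0m : ⁅W₀, Ωm⁆ = (-2 : ℂ) • Ωm) (hpm : ⁅Ωp, Ωm⁆ = W₀)
    (hW : ⁅W₀, ξ⁆ = μ • ξ) (hp : ⁅Ωp, ξ⁆ = 0) (l : ℕ) :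
    ⁅Ωp, xiVec Ωm ξ (l + 1)⁆ = (μ - l) • xiVec Ωm ξ l := by
  rw [xiVec, lie_smul, lie_adPow_succ_of_primitive hW0m hpm hW hp, smul_smul, xiVec, smul_smul]
  congr 1
  have hl : (l : ℂ) + 1 ≠ 0 := Nat.cast_add_one_ne_zero l
  push_cast [Nat.factorial_succ]
  field_simp

lemma adPow_xiVec_add (hW0m : ⁅W₀, Ωm⁆ = (-2 : ℂ) • Ωm) (hpm : ⁅Ωp, Ωm⁆ = W₀)
    (hW : ⁅W₀, ξ⁆ = μ • ξ) (hp : ⁅Ωp, ξ⁆ = 0) (d m : ℕ) :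
    adPow Ωp m (xiVec Ωm ξ (d + m)) = (∏ i ∈ range m, (μ - (d + i : ℕ))) • xiVec Ωm ξ d := by
  induction m with
  | zero => simp [adPow]
  | succ m ih =>
    rw [← add_assoc, adPow_succ, lie_xiVec_succ hW0m hpm hW hp, adPow_smul, ih, smul_smul,
      prod_range_succ, mul_comm]

lemma adPow_xiVec_eq_zero (hW0m : ⁅W₀, Ωm⁆ = (-2 : ℂ) • Ωm) (hpm : ⁅Ωp, Ωm⁆ = W₀)
    (hW : ⁅W₀, ξ⁆ = μ • ξ) (hp : ⁅Ωp, ξ⁆ = 0) {n m : ℕ} (h : n < m) :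
    adPow Ωp m (xiVec Ωm ξ n) = 0 := by
  obtain ⟨r, rfl⟩ := Nat.exists_eq_add_of_lt h
  have hξ := adPow_xiVec_add hW0m hpm hW hp 0 n
  rw [zero_add, xiVec_zero] at hξ
  rw [show n + r + 1 = r + (n + 1) by omega, adPow_add, adPow_succ', hξ, lie_smul, hp,
    smul_zero, adPow, map_zero]

lemma adPow_xiVec_mem_span_s6 (hW0m : ⁅W₀, Ωm⁆ = (-2 : ℂ) • Ωm) (hpm : ⁅Ωp, Ωm⁆ = W₀)
    (hW : ⁅W₀, ξ⁆ = μ • ξ) (hp : ⁅Ωp, ξ⁆ = 0) (m n : ℕ) :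
    adPow Ωp m (xiVec Ωm ξ n) ∈ Submodule.span ℂ (Set.range (xiVec Ωm ξ)) := by
  rcases lt_or_ge n m with h | h
  · rw [adPow_xiVec_eq_zero hW0m hpm hW hp h]
    exact zero_mem _
  · obtain ⟨d, rfl⟩ := Nat.exists_eq_add_of_le' h
    rw [adPow_xiVec_add hW0m hpm hW hp]
    exact Submodule.smul_mem _ _ (Submodule.subset_span ⟨d, rfl⟩)

lemma adPow_xiVec_add_ne_zero {w : ℕ} (hW0m : ⁅W₀, Ωm⁆ = (-2 : ℂ) • Ωm) (hpm : ⁅Ωp, Ωm⁆ = W₀)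
    (hW : ⁅W₀, ξ⁆ = (w : ℂ) • ξ) (hp : ⁅Ωp, ξ⁆ = 0) {d m : ℕ} (hd : d + m ≤ w)
    (hne : xiVec Ωm ξ (d + m) ≠ 0) : adPow Ωp m (xiVec Ωm ξ (d + m)) ≠ 0 := by
  rw [adPow_xiVec_add hW0m hpm hW hp]
  refine smul_ne_zero (prod_ne_zero_iff.mpr fun i hi => sub_ne_zero.mpr ?_)
    (xiVec_ne_zero_of_le hne (Nat.le_add_right d m))
  have : d + i < w := by simp only [mem_range] at hi; omega
  exact_mod_cast this.ne'

end Sl2String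

section Strings

variable {𝔤 : Type*} [LieRing 𝔤] [LieAlgebra ℂ 𝔤] {W₀ Ωp Ωm : 𝔤} {ι : Type*} [Fintype ι]
  {k : ι → ℕ} {ξ : ι → 𝔤}

lemma coeff_eq_zero_of_adPow_sum_xiVec_eq_zero (hW0m : ⁅W₀, Ωm⁆ = (-2 : ℂ) • Ωm)
    (hpm : ⁅Ωp, Ωm⁆ = W₀) (hhw : ∀ j, ⁅Ωp, ξ j⁆ = 0 ∧ ⁅W₀, ξ j⁆ = ((2 * k j : ℕ) : ℂ) • ξ j)
    (hindep : iSupIndep fun j => Submodule.span ℂ (Set.range fun l => xiVec Ωm (ξ j) l))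
    (hne : ∀ j, xiVec Ωm (ξ j) (k j - 1) ≠ 0) {co : ι → ℂ} {m : ℕ}
    (h : adPow Ωp m (∑ j, co j • xiVec Ωm (ξ j) (k j - 1)) = 0) {j : ι} (hj : m < k j) :
    co j = 0 := by
  have hterm : co j • adPow Ωp m (xiVec Ωm (ξ j) (k j - 1)) = 0 :=
    (iSupIndep_iff_finsetSum_eq_zero_imp_eq_zero _).mp hindep univ
      (fun i => co i • adPow Ωp m (xiVec Ωm (ξ i) (k i - 1)))
      (fun i _ => Submodule.smul_mem _ _
        (adPow_xiVec_mem_span_s6 hW0m hpm (hhw i).2 (hhw i).1 m _))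
      (by rwa [← adPow_sum_smul]) j (mem_univ j)
  obtain ⟨d, hd⟩ : ∃ d, k j - 1 = d + m := ⟨k j - 1 - m, by omega⟩
  refine (smul_eq_zero.mp hterm).resolve_right ?_
  have hne_j := hne j
  rw [hd] at hne_j ⊢
  exact adPow_xiVec_add_ne_zero hW0m hpm (hhw j).2 (hhw j).1 (by omega) hne_j

lemma adPow_sum_xiVec_eq_zero (hW0m : ⁅W₀, Ωm⁆ = (-2 : ℂ) • Ωm) (hpm : ⁅Ωp, Ωm⁆ = W₀)
    (hhw : ∀ j, ⁅Ωp, ξ j⁆ = 0 ∧ ⁅W₀, ξ j⁆ = ((2 * k j : ℕ) : ℂ) • ξ j) (hk : ∀ j, 0 < k j)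
    {co : ι → ℂ} {m : ℕ} (hco : ∀ j, co j ≠ 0 → k j ≤ m) :
    adPow Ωp m (∑ j, co j • xiVec Ωm (ξ j) (k j - 1)) = 0 := by
  rw [adPow_sum_smul]
  refine sum_eq_zero fun j _ => ?_
  by_cases hj : co j = 0
  · rw [hj, zero_smul]
  · have : k j - 1 < m := by have := hco j hj; have := hk j; omega
    rw [adPow_xiVec_eq_zero hW0m hpm (hhw j).2 (hhw j).1 this, smul_zero]

end Strings

theorem adPow_eq_zero_of_adPow_add_eq_zero_general
    (𝔤 : Type*) [LieRing 𝔤] [LieAlgebra ℂ 𝔤]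
    (W₀ Ωp Ωm : 𝔤)
    (hW0m : ⁅W₀, Ωm⁆ = (-2 : ℂ) • Ωm)
    (hpm : ⁅Ωp, Ωm⁆ = W₀)
    (N : ℕ) (k : Fin (N + 1) → ℕ) (ξ : Fin (N + 1) → 𝔤)
    (hk0 : k 0 = 1) (hkmono : Monotone k)
    (hhw : ∀ j, ⁅Ωp, ξ j⁆ = 0 ∧ ⁅W₀, ξ j⁆ = ((2 * k j : ℕ) : ℂ) • ξ j)
    (hindep : iSupIndep fun j => Submodule.span ℂ (Set.range fun l => xiVec Ωm (ξ j) l))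
    (hbasisli : LinearIndependent ℂ fun j => xiVec Ωm (ξ j) (k j - 1))
    (hbasissp : Submodule.span ℂ (Set.range fun j => xiVec Ωm (ξ j) (k j - 1)) = Vspace W₀ 2)
    (I : ℕ) (κ : Fin (I + 1) → ℕ) (hκ : StrictMono κ)
    (hkκ : ∀ j, ∃ l, k j = κ l)
    (tilde : ℕ → Fin (I + 1))
    (X : 𝔤) (hX : X ∈ Vspace W₀ 2)
    (s p : ℕ)
    (hsucc : (tilde p : ℕ) + 1 < I + 1)
    (hgap : κ (tilde p) + s < κ ⟨(tilde p : ℕ) + 1, hsucc⟩)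
    (h0 : adPow Ωp (κ (tilde p) + s) X = 0) :
    adPow Ωp (κ (tilde p)) X = 0 := by
  have hk_pos : ∀ j, 0 < k j := fun j =>
    (hk0 ▸ Nat.one_pos).trans_le (hkmono (Fin.zero_le j))
  rw [← hbasissp] at hX
  obtain ⟨co, rfl⟩ := (Submodule.mem_span_range_iff_exists_fun ℂ).mp hX
  refine adPow_sum_xiVec_eq_zero hW0m hpm hhw hk_pos fun j hj => ?_
  have hle : k j ≤ κ (tilde p) + s :=
    not_lt.mp fun hlt => hj (coeff_eq_zero_of_adPow_sum_xiVec_eq_zero hW0m hpm hhw hindep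
      hbasisli.ne_zero h0 hlt)
  obtain ⟨l, hl⟩ := hkκ j
  have hl_lt : (l : ℕ) < tilde p + 1 := hκ.lt_iff_lt.mp (hl ▸ hle.trans_lt hgap)
  exact hl ▸ hκ.monotone (Nat.lt_succ_iff.mp hl_lt)

/-- Lemma 6: if X ∈ V₂, κ_{p̃} + s < κ_{p̃+1} and ad(Ω₊)^{κ_{p̃}+s}(X) = 0,
then ad(Ω₊)^{κ_{p̃}}(X) = 0. -/
theorem adPow_eq_zero_of_adPow_add_eq_zero
    (𝔤 : Type*) [LieRing 𝔤] [LieAlgebra ℂ 𝔤] [FiniteDimensional ℂ 𝔤]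
    [LieAlgebra.IsSemisimple ℂ 𝔤]
    (c : 𝔤 → 𝔤)
    (hc_add : ∀ X Y : 𝔤, c (X + Y) = c X + c Y)
    (hc_smul : ∀ (z : ℂ) (X : 𝔤), c (z • X) = (starRingEnd ℂ z) • c X)
    (hc_lie : ∀ X Y : 𝔤, c ⁅X, Y⁆ = ⁅c X, c Y⁆)
    (hc_invol : ∀ X : 𝔤, c (c X) = X)
    (B : 𝔤 →ₗ[ℂ] 𝔤 →ₗ[ℂ] ℂ)
    (hB_symm : ∀ X Y : 𝔤, B X Y = B Y X)
    (hB_inv : ∀ X Y Z : 𝔤, B ⁅X, Y⁆ Z = B X ⁅Y, Z⁆)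
    (hB_pos : ∀ X : 𝔤, X ≠ 0 → 0 < (-(B (c X) X)).re ∧ (B (c X) X).im = 0)
    (W₀ Ωp Ωm : 𝔤)
    (hW0p : ⁅W₀, Ωp⁆ = (2 : ℂ) • Ωp)
    (hW0m : ⁅W₀, Ωm⁆ = (-2 : ℂ) • Ωm)
    (hpm : ⁅Ωp, Ωm⁆ = W₀)
    (hcΩ : c Ωp = -Ωm)
    (N : ℕ) (k : Fin (N + 1) → ℕ) (ξ : Fin (N + 1) → 𝔤)
    (hk0 : k 0 = 1) (hkmono : Monotone k)
    (hhw : ∀ j, ⁅Ωp, ξ j⁆ = 0 ∧ ⁅W₀, ξ j⁆ = ((2 * k j : ℕ) : ℂ) • ξ j)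
    (hindep : iSupIndep fun j => Submodule.span ℂ (Set.range fun l => xiVec Ωm (ξ j) l))
    (hconj : ∀ j, ∀ l ≤ 2 * k j,
      c (xiVec Ωm (ξ j) l) = ((-1 : ℂ)) ^ l • xiVec Ωm (ξ j) (2 * k j - l))
    (hbasisli : LinearIndependent ℂ fun j => xiVec Ωm (ξ j) (k j - 1))
    (hbasissp : Submodule.span ℂ (Set.range fun j => xiVec Ωm (ξ j) (k j - 1)) = Vspace W₀ 2)
    (I : ℕ) (κ : Fin (I + 1) → ℕ) (hκ : StrictMono κ)
    (hkκ : ∀ j, ∃ l, k j = κ l) (hκk : ∀ l, ∃ j, k j = κ l)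
    (tilde : ℕ → Fin (I + 1))
    (htilde0 : tilde 0 = 0)
    (htilde : ∀ s : ℕ, 0 < s → κ (tilde s) ≤ s ∧ ∀ l : Fin (I + 1), κ l ≤ s → l ≤ tilde s)
    (X : 𝔤) (hX : X ∈ Vspace W₀ 2)
    (s p : ℕ)
    (hsucc : (tilde p : ℕ) + 1 < I + 1)
    (hgap : κ (tilde p) + s < κ ⟨(tilde p : ℕ) + 1, hsucc⟩)
    (h0 : adPow Ωp (κ (tilde p) + s) X = 0) :
    adPow Ωp (κ (tilde p)) X = 0 :=
  adPow_eq_zero_of_adPow_add_eq_zero_general 𝔤 W₀ Ωp Ωm hW0m hpm N k ξ hk0 hkmono hhw hindep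
    hbasisli hbasissp I κ hκ hkκ tilde X hX s p hsucc hgap h0
end
end

section
/- Let 0 < r₀ < r₁ and let (m, S, ω_1,…,ω_L, E_1,…,E_L) be a C² solution of the field equations on [r₀, r₁) with S(r₀) > 0 and inf_{r ∈ [r₀, r₁)} μ(r) > 0. Then: m is nondecreasing and bounded on [r₀, r₁); S is nondecreasing and bounded on [r₀, r₁); and each of the functions ω_i, ω_i′, E_i, E_i′ (i = 1,…,L) is bounded on [r₀, r₁). Consequently the solution extends regularly to r = r₁. -/
/-!
All four terms of `m′` are nonnegative (`η` and `P` are quadratic forms of the positive definite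
matrices `h⁻¹` and `h`), so `m` is nondecreasing, and `μ ≥ δ > 0` bounds it above by
`r₁ (|k| + r₁²/ℓ²)/2`. Every other quantity then has its derivative dominated by `m′` or by
quantities already known to be bounded: `(log S)′ ≤ 2m′/(δ r₀)`, `|ωᵢ′| ≤ 1/2 + αᵢ m′/(2δ)`,
the energy `W = Σⱼ Eⱼ² + (r² Eⱼ′/S)²` satisfies `W′ = O(W)` and is bounded by Gronwall, and
`(μ S ωᵢ′)′ = -Eᵢ² ωᵢ/(μ S) - S Fᵢ/r²` is bounded. A function on `[r₀, r₁)` whose derivative is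
dominated by that of a bounded monotone function is bounded and has a limit at `r₁`.
-/

noncomputable section

open Filter Asymptotics

/-- The metric function μ(r) = k − 2m(r)/r + r²/ℓ². -/
def muF (k ℓ : ℝ) (m : ℝ → ℝ) (r : ℝ) : ℝ := k - 2 * m r / r + r ^ 2 / ℓ ^ 2

/-- η = Σᵢⱼ Eᵢ′ (C⁻¹)ᵢⱼ Eⱼ′/|αⱼ|². -/
def etaF {L : ℕ} (C : Matrix (Fin L) (Fin L) ℝ) (alpha2 : Fin L → ℝ)
    (E : Fin L → ℝ → ℝ) (r : ℝ) : ℝ :=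
  ∑ i, ∑ j, deriv (E i) r * (C⁻¹ i j) * deriv (E j) r / alpha2 j

/-- ζ = Σᵢ Eᵢ² ωᵢ²/|αᵢ|². -/
def zetaF {L : ℕ} (alpha2 : Fin L → ℝ) (ω E : Fin L → ℝ → ℝ) (r : ℝ) : ℝ :=
  ∑ i, (E i r) ^ 2 * (ω i r) ^ 2 / alpha2 i

/-- G = Σᵢ (ωᵢ′)²/|αᵢ|². -/
def GF {L : ℕ} (alpha2 : Fin L → ℝ) (ω : Fin L → ℝ → ℝ) (r : ℝ) : ℝ :=
  ∑ i, (deriv (ω i) r) ^ 2 / alpha2 i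

/-- P = (1/8) Σᵢⱼ (k wᵢ − ωᵢ²) hᵢⱼ (k wⱼ − ωⱼ²), where hᵢⱼ = 2Cᵢⱼ/|αⱼ|². -/
def PF {L : ℕ} (C : Matrix (Fin L) (Fin L) ℝ) (alpha2 : Fin L → ℝ) (w : Fin L → ℝ)
    (k : ℝ) (ω : Fin L → ℝ → ℝ) (r : ℝ) : ℝ :=
  (1 / 8) * ∑ i, ∑ j, (k * w i - (ω i r) ^ 2) * (2 * C i j / alpha2 j) * (k * w j - (ω j r) ^ 2)

/-- Fᵢ = (ωᵢ/2) Σⱼ Cᵢⱼ (k wⱼ − ωⱼ²). -/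
def FF {L : ℕ} (C : Matrix (Fin L) (Fin L) ℝ) (w : Fin L → ℝ) (k : ℝ)
    (ω : Fin L → ℝ → ℝ) (i : Fin L) (r : ℝ) : ℝ :=
  (ω i r / 2) * ∑ j, C i j * (k * w j - (ω j r) ^ 2)

/-- Zᵢ = Σⱼ Cᵢⱼ Eⱼ ωⱼ². -/
def ZF {L : ℕ} (C : Matrix (Fin L) (Fin L) ℝ) (ω E : Fin L → ℝ → ℝ)
    (i : Fin L) (r : ℝ) : ℝ :=
  ∑ j, C i j * E j r * (ω j r) ^ 2

/-- The static topological dyonic adS Einstein–Yang–Mills field equations at radius `r`. -/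
def FieldEqnsAt {L : ℕ} (C : Matrix (Fin L) (Fin L) ℝ) (alpha2 w : Fin L → ℝ) (k ℓ : ℝ)
    (m S : ℝ → ℝ) (ω E : Fin L → ℝ → ℝ) (r : ℝ) : Prop :=
  deriv m r = r ^ 2 * etaF C alpha2 E r / (S r) ^ 2
      + zetaF alpha2 ω E r / (muF k ℓ m r * (S r) ^ 2)
      + muF k ℓ m r * GF alpha2 ω r + PF C alpha2 w k ω r / r ^ 2 ∧
  deriv S r / S r = 2 * GF alpha2 ω r / r
      + 2 * zetaF alpha2 ω E r / ((muF k ℓ m r) ^ 2 * (S r) ^ 2 * r) ∧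
  (∀ i, deriv (deriv (E i)) r
      + (2 / r) * (1 - GF alpha2 ω r - zetaF alpha2 ω E r / ((muF k ℓ m r) ^ 2 * (S r) ^ 2))
        * deriv (E i) r
      - ZF C ω E i r / (muF k ℓ m r * r ^ 2) = 0) ∧
  (∀ i, r ^ 2 * muF k ℓ m r * deriv (deriv (ω i)) r
      + 2 * (m r - PF C alpha2 w k ω r / r - r ^ 3 * etaF C alpha2 E r / (S r) ^ 2 + r ^ 3 / ℓ ^ 2)
        * deriv (ω i) r
      + r ^ 2 * (E i r) ^ 2 * ω i r / (muF k ℓ m r * (S r) ^ 2) + FF C w k ω i r = 0)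

open Set Topology

section MeanValue

variable {D : Set ℝ} {f g f' g' : ℝ → ℝ} {x y : ℝ}

theorem sub_le_sub_of_hasDerivAt_le (hD : Convex ℝ D) (hf : ContinuousOn f D)
    (hg : ContinuousOn g D) (hf' : ∀ t ∈ interior D, HasDerivAt f (f' t) t)
    (hg' : ∀ t ∈ interior D, HasDerivAt g (g' t) t) (hle : ∀ t ∈ interior D, f' t ≤ g' t)
    (hx : x ∈ D) (hy : y ∈ D) (hxy : x ≤ y) : f y - f x ≤ g y - g x := by
  have hmono : MonotoneOn (fun t => g t - f t) D :=
    monotoneOn_of_hasDerivWithinAt_nonneg hD (hg.sub hf)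
      (fun t ht => ((hg' t ht).sub (hf' t ht)).hasDerivWithinAt)
      (fun t ht => sub_nonneg.2 (hle t ht))
  linarith [hmono hx hy hxy]

theorem abs_sub_le_of_abs_hasDerivAt_le (hD : Convex ℝ D) (hf : ContinuousOn f D)
    (hg : ContinuousOn g D) (hf' : ∀ t ∈ interior D, HasDerivAt f (f' t) t)
    (hg' : ∀ t ∈ interior D, HasDerivAt g (g' t) t) (hle : ∀ t ∈ interior D, |f' t| ≤ g' t)
    (hx : x ∈ D) (hy : y ∈ D) (hxy : x ≤ y) : |f y - f x| ≤ g y - g x := by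
  have hup := sub_le_sub_of_hasDerivAt_le hD hf hg hf' hg'
    (fun t ht => (le_abs_self _).trans (hle t ht)) hx hy hxy
  have hdown := sub_le_sub_of_hasDerivAt_le (f := fun t => -f t) hD hf.neg hg
    (fun t ht => (hf' t ht).neg) hg' (fun t ht => (neg_le_abs _).trans (hle t ht)) hx hy hxy
  rw [abs_sub_le_iff]
  constructor <;> linarith

theorem le_mul_exp_of_hasDerivAt_le_mul (hD : Convex ℝ D) (hf : ContinuousOn f D)
    (hf' : ∀ t ∈ interior D, HasDerivAt f (f' t) t) {K : ℝ}
    (hle : ∀ t ∈ interior D, f' t ≤ K * f t) (hx : x ∈ D) (hy : y ∈ D) (hxy : x ≤ y) :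
    f y ≤ f x * Real.exp (K * (y - x)) := by
  have hanti : AntitoneOn (fun t => f t * Real.exp (-(K * t))) D := by
    refine antitoneOn_of_hasDerivWithinAt_nonpos hD (hf.mul (by fun_prop))
      (fun t ht => ((hf' t ht).mul ((hasDerivAt_id t).const_mul K).neg.exp).hasDerivWithinAt)
      (fun t ht => ?_)
    have hexp := Real.exp_pos (-(K * t))
    simp only [Pi.neg_apply, id, mul_one]
    nlinarith [hle t ht]
  have h := hanti hx hy hxy
  have hsplit : Real.exp (K * (y - x)) = Real.exp (-(K * x)) * Real.exp (K * y) := by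
    rw [← Real.exp_add]; ring_nf
  calc f y = f y * Real.exp (-(K * y)) * Real.exp (K * y) := by
        rw [mul_assoc, ← Real.exp_add]; simp
    _ ≤ f x * Real.exp (-(K * x)) * Real.exp (K * y) := by gcongr
    _ = f x * Real.exp (K * (y - x)) := by rw [hsplit]; ring

end MeanValue

section LeftLimit

variable {a b : ℝ} {s : Set ℝ} {f g f' g' : ℝ → ℝ}

theorem isBigO_one_principal_iff :
    f =O[𝓟 s] (fun _ => (1 : ℝ)) ↔ ∃ B, ∀ x ∈ s, |f x| ≤ B := by
  simp only [isBigO_principal, Real.norm_eq_abs, abs_one, mul_one]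

theorem isBigO_inv_one_of_le {c : ℝ} (hc : 0 < c) (hf : ∀ x ∈ s, c ≤ f x) :
    (fun x => (f x)⁻¹) =O[𝓟 s] (fun _ => (1 : ℝ)) := by
  refine isBigO_one_principal_iff.2 ⟨c⁻¹, fun x hx => ?_⟩
  rw [abs_inv, abs_of_pos (hc.trans_le (hf x hx))]
  exact inv_anti₀ hc (hf x hx)

theorem isBigO_one_Ico_of_Ioo (hf : f =O[𝓟 (Ioo a b)] (fun _ => (1 : ℝ))) :
    f =O[𝓟 (Ico a b)] (fun _ => (1 : ℝ)) := by
  obtain ⟨B, hB⟩ := isBigO_one_principal_iff.1 hf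
  refine isBigO_one_principal_iff.2 ⟨max B |f a|, fun x hx => ?_⟩
  rcases hx.1.eq_or_lt with rfl | hax
  · exact le_max_right _ _
  · exact (hB x ⟨hax, hx.2⟩).trans (le_max_left _ _)

theorem MonotoneOn.isBigO_one_Ico (hf : MonotoneOn f (Ico a b))
    (hbdd : BddAbove (f '' Ico a b)) : f =O[𝓟 (Ico a b)] (fun _ => (1 : ℝ)) := by
  obtain ⟨M, hM⟩ := hbdd
  refine isBigO_one_principal_iff.2 ⟨max |f a| |M|, fun x hx => abs_le.2 ⟨?_, ?_⟩⟩
  · have := hf ⟨le_rfl, hx.1.trans_lt hx.2⟩ hx hx.1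
    linarith [neg_abs_le (f a), le_max_left |f a| |M|]
  · linarith [hM (mem_image_of_mem f hx), le_abs_self M, le_max_right |f a| |M|]

theorem MonotoneOn.exists_tendsto_nhdsLT_Ico (hab : a < b) (hf : MonotoneOn f (Ico a b))
    (hbdd : BddAbove (f '' Ico a b)) : ∃ l, Tendsto f (𝓝[<] b) (𝓝 l) := by
  have hmem : ∀ x ∈ Iio b, max a x ∈ Ico a b := fun x hx => ⟨le_max_left _ _, max_lt hab hx⟩
  have hmono : MonotoneOn (fun x => f (max a x)) (Iio b) :=
    fun x hx y hy hxy => hf (hmem x hx) (hmem y hy) (max_le_max le_rfl hxy)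
  have hbdd' : BddAbove ((fun x => f (max a x)) '' Iio b) :=
    hbdd.mono (by rintro _ ⟨x, hx, rfl⟩; exact mem_image_of_mem f (hmem x hx))
  refine ⟨_, (hmono.tendsto_nhdsLT hbdd').congr' ?_⟩
  filter_upwards [Ioo_mem_nhdsLT hab] with x hx
  rw [max_eq_right hx.1.le]

theorem monotoneOn_Ico_of_hasDerivAt_nonneg (hf : ContinuousOn f (Ico a b))
    (hf' : ∀ x ∈ Ioo a b, HasDerivAt f (f' x) x) (hf'₀ : ∀ x ∈ Ioo a b, 0 ≤ f' x) :
    MonotoneOn f (Ico a b) :=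
  monotoneOn_of_hasDerivWithinAt_nonneg (convex_Ico a b) hf
    (by rw [interior_Ico]; exact fun x hx => (hf' x hx).hasDerivWithinAt)
    (by rw [interior_Ico]; exact hf'₀)

theorem abs_sub_le_of_abs_hasDerivAt_le_Ico (hf : ContinuousOn f (Ico a b))
    (hg : ContinuousOn g (Ico a b)) (hf' : ∀ x ∈ Ioo a b, HasDerivAt f (f' x) x)
    (hg' : ∀ x ∈ Ioo a b, HasDerivAt g (g' x) x) (hle : ∀ x ∈ Ioo a b, |f' x| ≤ g' x)
    {x y : ℝ} (hx : x ∈ Ico a b) (hy : y ∈ Ico a b) (hxy : x ≤ y) :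
    |f y - f x| ≤ g y - g x := by
  rw [← interior_Ico] at hf' hg' hle
  exact abs_sub_le_of_abs_hasDerivAt_le (convex_Ico a b) hf hg hf' hg' hle hx hy hxy

theorem isBigO_one_of_abs_hasDerivAt_le (hf : ContinuousOn f (Ico a b))
    (hg : ContinuousOn g (Ico a b)) (hf' : ∀ x ∈ Ioo a b, HasDerivAt f (f' x) x)
    (hg' : ∀ x ∈ Ioo a b, HasDerivAt g (g' x) x) (hle : ∀ x ∈ Ioo a b, |f' x| ≤ g' x)
    (hbdd : BddAbove (g '' Ico a b)) : f =O[𝓟 (Ico a b)] (fun _ => (1 : ℝ)) := by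
  obtain ⟨M, hM⟩ := hbdd
  refine isBigO_one_principal_iff.2 ⟨|f a| + (M - g a), fun x hx => ?_⟩
  have ha : a ∈ Ico a b := ⟨le_rfl, hx.1.trans_lt hx.2⟩
  have hvar := abs_sub_le_of_abs_hasDerivAt_le_Ico hf hg hf' hg' hle ha hx hx.1
  have hgx := hM (mem_image_of_mem g hx)
  calc |f x| ≤ |f a| + |f x - f a| := by simpa using abs_add_le (f a) (f x - f a)
    _ ≤ |f a| + (M - g a) := by linarith

theorem exists_tendsto_nhdsLT_of_abs_hasDerivAt_le (hab : a < b) (hf : ContinuousOn f (Ico a b))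
    (hg : ContinuousOn g (Ico a b)) (hf' : ∀ x ∈ Ioo a b, HasDerivAt f (f' x) x)
    (hg' : ∀ x ∈ Ioo a b, HasDerivAt g (g' x) x) (hle : ∀ x ∈ Ioo a b, |f' x| ≤ g' x)
    (hbdd : BddAbove (g '' Ico a b)) : ∃ l, Tendsto f (𝓝[<] b) (𝓝 l) := by
  have hvar {x y} (hx : x ∈ Ico a b) (hy : y ∈ Ico a b) (hxy : x ≤ y) :=
    abs_sub_le_of_abs_hasDerivAt_le_Ico hf hg hf' hg' hle hx hy hxy
  have hg_mono : MonotoneOn g (Ico a b) := fun x hx y hy hxy => by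
    linarith [abs_nonneg (f y - f x), hvar hx hy hxy]
  have hfg_mono : MonotoneOn (fun x => f x + g x) (Ico a b) := fun x hx y hy hxy => by
    linarith [neg_abs_le (f y - f x), hvar hx hy hxy]
  obtain ⟨M, hM⟩ := hbdd
  have ha : a ∈ Ico a b := ⟨le_rfl, hab⟩
  have hfg_bdd : BddAbove ((fun x => f x + g x) '' Ico a b) := by
    refine ⟨f a - g a + 2 * M, ?_⟩
    rintro _ ⟨x, hx, rfl⟩
    linarith [le_abs_self (f x - f a), hvar ha hx hx.1, hM (mem_image_of_mem g hx)]
  obtain ⟨l₁, hl₁⟩ := hfg_mono.exists_tendsto_nhdsLT_Ico hab hfg_bdd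
  obtain ⟨l₂, hl₂⟩ := hg_mono.exists_tendsto_nhdsLT_Ico hab ⟨M, hM⟩
  exact ⟨l₁ - l₂, (hl₁.sub hl₂).congr fun x => add_sub_cancel_right (f x) (g x)⟩

theorem isBigO_one_and_exists_tendsto_of_hasDerivAt (hab : a < b)
    (hf : ContinuousOn f (Ico a b)) (hf' : ∀ x ∈ Ioo a b, HasDerivAt f (f' x) x)
    (hbdd : f' =O[𝓟 (Ioo a b)] (fun _ => (1 : ℝ))) :
    f =O[𝓟 (Ico a b)] (fun _ => (1 : ℝ)) ∧ ∃ l, Tendsto f (𝓝[<] b) (𝓝 l) := by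
  obtain ⟨B, hB⟩ := isBigO_one_principal_iff.1 hbdd
  have hg : ContinuousOn (fun x => B * x) (Ico a b) := by fun_prop
  have hg' : ∀ x ∈ Ioo a b, HasDerivAt (fun x => B * x) B x := fun x _ => by
    simpa using (hasDerivAt_id x).const_mul B
  have hgbdd : BddAbove ((fun x => B * x) '' Ico a b) :=
    (isCompact_Icc.bddAbove_image (by fun_prop)).mono (image_mono Ico_subset_Icc_self)
  exact ⟨isBigO_one_of_abs_hasDerivAt_le hf hg hf' hg' hB hgbdd,
    exists_tendsto_nhdsLT_of_abs_hasDerivAt_le hab hf hg hf' hg' hB hgbdd⟩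

end LeftLimit

theorem ContDiffOn.hasDerivAt_of_mem_nhds {f : ℝ → ℝ} {s : Set ℝ} {x : ℝ}
    (hf : ContDiffOn ℝ 2 f s) (hx : s ∈ 𝓝 x) : HasDerivAt f (deriv f x) x :=
  ((hf.contDiffAt hx).differentiableAt (by norm_num)).hasDerivAt

theorem ContDiffOn.hasDerivAt_derivWithin_of_mem_nhds {f : ℝ → ℝ} {s : Set ℝ} {x : ℝ}
    (hf : ContDiffOn ℝ 2 f s) (hx : s ∈ 𝓝 x) :
    HasDerivAt (derivWithin f s) (deriv (deriv f) x) x := by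
  have hd : HasDerivAt (deriv f) (deriv (deriv f) x) x :=
    (((hf.contDiffAt hx).derivWithin (m := 1) (by norm_num)).differentiableAt
      (by norm_num)).hasDerivAt
  refine hd.congr_of_eventuallyEq ?_
  filter_upwards [eventually_mem_nhds_iff.2 hx] with y hy using derivWithin_of_mem_nhds hy

section QuadraticForms

variable {L : ℕ} {C : Matrix (Fin L) (Fin L) ℝ} {alpha2 : Fin L → ℝ}

theorem Matrix.PosSemidef.sum_mul_mul_nonneg {H : Matrix (Fin L) (Fin L) ℝ} (hH : H.PosSemidef)
    (x : Fin L → ℝ) : 0 ≤ ∑ i, ∑ j, x i * H i j * x j := by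
  have h := hH.dotProduct_mulVec_nonneg x
  simpa [dotProduct, Matrix.mulVec, Finset.mul_sum, mul_assoc] using h

theorem PF_nonneg (hposdef : (Matrix.of fun i j => 2 * C i j / alpha2 j).PosDef)
    (w : Fin L → ℝ) (k : ℝ) (ω : Fin L → ℝ → ℝ) (r : ℝ) : 0 ≤ PF C alpha2 w k ω r :=
  mul_nonneg (by norm_num)
    (hposdef.posSemidef.sum_mul_mul_nonneg fun i => k * w i - ω i r ^ 2)

theorem etaF_nonneg (halpha : ∀ j, 0 < alpha2 j)
    (hposdef : (Matrix.of fun i j => 2 * C i j / alpha2 j).PosDef)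
    (E : Fin L → ℝ → ℝ) (r : ℝ) : 0 ≤ etaF C alpha2 E r := by
  have hfactor : (Matrix.of fun i j => 2 * C i j / alpha2 j)
      = C * Matrix.diagonal fun j => 2 / alpha2 j := by
    ext i j
    simp [Matrix.mul_diagonal, mul_div_assoc, mul_comm]
  have hdiag :
      (Matrix.diagonal fun j => 2 / alpha2 j)⁻¹ = Matrix.diagonal fun j => alpha2 j / 2 := by
    refine Matrix.inv_eq_left_inv ?_
    rw [Matrix.diagonal_mul_diagonal, ← Matrix.diagonal_one]
    congr 1
    ext j
    have := (halpha j).ne'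
    field_simp
  -- `h⁻¹ = diag(α/2) C⁻¹`, so `η` is twice the quadratic form of `h⁻¹` at `(E'ⱼ/αⱼ)ⱼ`.
  have hinv := hposdef.inv.posSemidef.sum_mul_mul_nonneg fun i => deriv (E i) r / alpha2 i
  rw [hfactor, Matrix.mul_inv_rev, hdiag] at hinv
  have hterm : ∀ i j, deriv (E i) r / alpha2 i
      * ((Matrix.diagonal fun j => alpha2 j / 2) * C⁻¹) i j * (deriv (E j) r / alpha2 j)
      = (deriv (E i) r * C⁻¹ i j * deriv (E j) r / alpha2 j) / 2 := by
    intro i j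
    have := (halpha i).ne'
    rw [Matrix.diagonal_mul]
    field_simp
  simp only [hterm, ← Finset.sum_div] at hinv
  unfold etaF
  linarith

theorem GF_nonneg (halpha : ∀ j, 0 ≤ alpha2 j) (ω : Fin L → ℝ → ℝ) (r : ℝ) :
    0 ≤ GF alpha2 ω r :=
  Finset.sum_nonneg fun j _ => div_nonneg (sq_nonneg _) (halpha j)

theorem zetaF_nonneg (halpha : ∀ j, 0 ≤ alpha2 j) (ω E : Fin L → ℝ → ℝ) (r : ℝ) :
    0 ≤ zetaF alpha2 ω E r :=
  Finset.sum_nonneg fun j _ => div_nonneg (mul_nonneg (sq_nonneg _) (sq_nonneg _)) (halpha j)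

end QuadraticForms

/-- Taken with `derivWithin s`, so that it stays continuous up to the closed end of `s`. -/
def fluxF {L : ℕ} (s : Set ℝ) (S : ℝ → ℝ) (E : Fin L → ℝ → ℝ) (i : Fin L) (r : ℝ) : ℝ :=
  r ^ 2 * derivWithin (E i) s r / S r

def sumSq {L : ℕ} (E Q : Fin L → ℝ → ℝ) (r : ℝ) : ℝ :=
  ∑ j, (E j r ^ 2 + Q j r ^ 2)

theorem sumSq_nonneg {L : ℕ} (E Q : Fin L → ℝ → ℝ) (r : ℝ) : 0 ≤ sumSq E Q r :=
  Finset.sum_nonneg fun _ _ => by positivity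

theorem sq_le_sumSq {L : ℕ} (E Q : Fin L → ℝ → ℝ) (j : Fin L) (r : ℝ) :
    E j r ^ 2 + Q j r ^ 2 ≤ sumSq E Q r :=
  Finset.single_le_sum (f := fun j => E j r ^ 2 + Q j r ^ 2) (fun _ _ => by positivity)
    (Finset.mem_univ j)

theorem abs_mul_le_sumSq {L : ℕ} (E Q : Fin L → ℝ → ℝ) (i j : Fin L) (r : ℝ) :
    |E i r * Q j r| ≤ sumSq E Q r := by
  have hi := sq_le_sumSq E Q i r
  have hj := sq_le_sumSq E Q j r
  rw [abs_mul]
  nlinarith [sq_nonneg (|E i r| - |Q j r|), sq_abs (E i r), sq_abs (Q j r), sq_nonneg (E j r),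
    sq_nonneg (Q i r)]

theorem hasDerivAt_muF {k ℓ r m' : ℝ} {m : ℝ → ℝ} (hm : HasDerivAt m m' r) (hr : r ≠ 0) :
    HasDerivAt (muF k ℓ m) (-((2 * m' * r - 2 * m r) / r ^ 2) + 2 * r / ℓ ^ 2) r := by
  have hquot := (hm.const_mul 2).div (hasDerivAt_id r) hr
  have hsq : HasDerivAt (fun y : ℝ => y ^ 2 / ℓ ^ 2) (2 * r / ℓ ^ 2) r := by
    simpa using (hasDerivAt_pow 2 r).div_const (ℓ ^ 2)
  have hsum := (hquot.const_sub k).add hsq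
  rw [mul_one] at hsum
  exact hsum

structure RegularSolution {L : ℕ} (C : Matrix (Fin L) (Fin L) ℝ) (alpha2 w : Fin L → ℝ)
    (k ℓ : ℝ) (m S : ℝ → ℝ) (ω E : Fin L → ℝ → ℝ) (r₀ r₁ δ : ℝ) : Prop where
  alpha2_pos : ∀ j, 0 < alpha2 j
  posDef : (Matrix.of fun i j => 2 * C i j / alpha2 j).PosDef
  r₀_pos : 0 < r₀
  r₀_lt_r₁ : r₀ < r₁
  contDiffOn_m : ContDiffOn ℝ 2 m (Ico r₀ r₁)
  contDiffOn_S : ContDiffOn ℝ 2 S (Ico r₀ r₁)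
  contDiffOn_ω : ∀ i, ContDiffOn ℝ 2 (ω i) (Ico r₀ r₁)
  contDiffOn_E : ∀ i, ContDiffOn ℝ 2 (E i) (Ico r₀ r₁)
  fieldEqnsAt : ∀ r ∈ Ico r₀ r₁, FieldEqnsAt C alpha2 w k ℓ m S ω E r
  S_pos : ∀ r ∈ Ico r₀ r₁, 0 < S r
  δ_pos : 0 < δ
  δ_le_muF : ∀ r ∈ Ico r₀ r₁, δ ≤ muF k ℓ m r

namespace RegularSolution

variable {L : ℕ} {C : Matrix (Fin L) (Fin L) ℝ} {alpha2 w : Fin L → ℝ} {k ℓ r₀ r₁ δ r : ℝ}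
  {m S : ℝ → ℝ} {ω E : Fin L → ℝ → ℝ}

theorem pos_of_mem (h : RegularSolution C alpha2 w k ℓ m S ω E r₀ r₁ δ)
    (hr : r ∈ Ico r₀ r₁) : 0 < r :=
  h.r₀_pos.trans_le hr.1

theorem muF_pos (h : RegularSolution C alpha2 w k ℓ m S ω E r₀ r₁ δ) (hr : r ∈ Ico r₀ r₁) :
    0 < muF k ℓ m r :=
  h.δ_pos.trans_le (h.δ_le_muF r hr)

theorem hasDerivAt_m (h : RegularSolution C alpha2 w k ℓ m S ω E r₀ r₁ δ)
    (hr : r ∈ Ioo r₀ r₁) : HasDerivAt m (deriv m r) r :=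
  h.contDiffOn_m.hasDerivAt_of_mem_nhds (Ico_mem_nhds_iff.2 hr)

theorem hasDerivAt_S (h : RegularSolution C alpha2 w k ℓ m S ω E r₀ r₁ δ)
    (hr : r ∈ Ioo r₀ r₁) : HasDerivAt S (deriv S r) r :=
  h.contDiffOn_S.hasDerivAt_of_mem_nhds (Ico_mem_nhds_iff.2 hr)

theorem hasDerivAt_ω (h : RegularSolution C alpha2 w k ℓ m S ω E r₀ r₁ δ)
    (hr : r ∈ Ioo r₀ r₁) (i : Fin L) : HasDerivAt (ω i) (deriv (ω i) r) r :=
  (h.contDiffOn_ω i).hasDerivAt_of_mem_nhds (Ico_mem_nhds_iff.2 hr)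

theorem hasDerivAt_E (h : RegularSolution C alpha2 w k ℓ m S ω E r₀ r₁ δ)
    (hr : r ∈ Ioo r₀ r₁) (i : Fin L) : HasDerivAt (E i) (deriv (E i) r) r :=
  (h.contDiffOn_E i).hasDerivAt_of_mem_nhds (Ico_mem_nhds_iff.2 hr)

theorem muF_mul_GF_add_le_deriv_m (h : RegularSolution C alpha2 w k ℓ m S ω E r₀ r₁ δ)
    (hr : r ∈ Ico r₀ r₁) :
    muF k ℓ m r * GF alpha2 ω r + zetaF alpha2 ω E r / (muF k ℓ m r * S r ^ 2) ≤ deriv m r := by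
  have hη := etaF_nonneg h.alpha2_pos h.posDef E r
  have hP := PF_nonneg h.posDef w k ω r
  rw [(h.fieldEqnsAt r hr).1]
  have : 0 ≤ r ^ 2 * etaF C alpha2 E r / S r ^ 2 := by positivity
  have : 0 ≤ PF C alpha2 w k ω r / r ^ 2 := by positivity
  linarith

theorem deriv_m_nonneg (h : RegularSolution C alpha2 w k ℓ m S ω E r₀ r₁ δ)
    (hr : r ∈ Ico r₀ r₁) : 0 ≤ deriv m r := by
  have hG := GF_nonneg (fun j => (h.alpha2_pos j).le) ω r
  have hζ := zetaF_nonneg (fun j => (h.alpha2_pos j).le) ω E r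
  have hμ := h.muF_pos hr
  have : 0 ≤ muF k ℓ m r * GF alpha2 ω r + zetaF alpha2 ω E r / (muF k ℓ m r * S r ^ 2) := by
    positivity
  linarith [h.muF_mul_GF_add_le_deriv_m hr]

theorem monotoneOn_m (h : RegularSolution C alpha2 w k ℓ m S ω E r₀ r₁ δ) :
    MonotoneOn m (Ico r₀ r₁) :=
  monotoneOn_Ico_of_hasDerivAt_nonneg h.contDiffOn_m.continuousOn (fun _ hr => h.hasDerivAt_m hr)
    (fun _ hr => h.deriv_m_nonneg (Ioo_subset_Ico_self hr))

theorem m_le (h : RegularSolution C alpha2 w k ℓ m S ω E r₀ r₁ δ) (hr : r ∈ Ico r₀ r₁) :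
    m r ≤ r₁ * (|k| + r₁ ^ 2 / ℓ ^ 2) / 2 := by
  have hr0 := h.pos_of_mem hr
  have hμ := h.muF_pos hr
  rw [muF, sub_add_eq_add_sub, sub_pos, div_lt_iff₀ hr0] at hμ
  have hsq : r ^ 2 / ℓ ^ 2 ≤ r₁ ^ 2 / ℓ ^ 2 := by gcongr; exact hr.2.le
  have hk : k + r ^ 2 / ℓ ^ 2 ≤ |k| + r₁ ^ 2 / ℓ ^ 2 := by linarith [le_abs_self k]
  have hpos : 0 ≤ |k| + r₁ ^ 2 / ℓ ^ 2 := by positivity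
  nlinarith [mul_le_mul hk hr.2.le hr0.le hpos]

theorem bddAbove_m (h : RegularSolution C alpha2 w k ℓ m S ω E r₀ r₁ δ) :
    BddAbove (m '' Ico r₀ r₁) :=
  ⟨_, by rintro _ ⟨r, hr, rfl⟩; exact h.m_le hr⟩

theorem deriv_S_div_S_eq (h : RegularSolution C alpha2 w k ℓ m S ω E r₀ r₁ δ)
    (hr : r ∈ Ico r₀ r₁) :
    deriv S r / S r = 2 * (muF k ℓ m r * GF alpha2 ω r
      + zetaF alpha2 ω E r / (muF k ℓ m r * S r ^ 2)) / (muF k ℓ m r * r) := by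
  have := (h.muF_pos hr).ne'
  have := (h.pos_of_mem hr).ne'
  have := (h.S_pos r hr).ne'
  rw [(h.fieldEqnsAt r hr).2.1]
  field_simp

theorem deriv_S_nonneg (h : RegularSolution C alpha2 w k ℓ m S ω E r₀ r₁ δ)
    (hr : r ∈ Ico r₀ r₁) : 0 ≤ deriv S r := by
  have hG := GF_nonneg (fun j => (h.alpha2_pos j).le) ω r
  have hζ := zetaF_nonneg (fun j => (h.alpha2_pos j).le) ω E r
  have hμ := h.muF_pos hr
  have hr0 := h.pos_of_mem hr
  have hS := h.S_pos r hr
  have hquot : 0 ≤ deriv S r / S r := by rw [h.deriv_S_div_S_eq hr]; positivity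
  simpa using (le_div_iff₀ hS).1 hquot

theorem monotoneOn_S (h : RegularSolution C alpha2 w k ℓ m S ω E r₀ r₁ δ) :
    MonotoneOn S (Ico r₀ r₁) :=
  monotoneOn_Ico_of_hasDerivAt_nonneg h.contDiffOn_S.continuousOn (fun _ hr => h.hasDerivAt_S hr)
    (fun _ hr => h.deriv_S_nonneg (Ioo_subset_Ico_self hr))

theorem deriv_S_div_S_le (h : RegularSolution C alpha2 w k ℓ m S ω E r₀ r₁ δ)
    (hr : r ∈ Ico r₀ r₁) : deriv S r / S r ≤ 2 / (δ * r₀) * deriv m r := by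
  have hG := GF_nonneg (fun j => (h.alpha2_pos j).le) ω r
  have hζ := zetaF_nonneg (fun j => (h.alpha2_pos j).le) ω E r
  have hμ := h.muF_pos hr
  have hδ := h.δ_pos
  have hr₀ := h.r₀_pos
  have hden : δ * r₀ ≤ muF k ℓ m r * r := mul_le_mul (h.δ_le_muF r hr) hr.1 hr₀.le hμ.le
  rw [h.deriv_S_div_S_eq hr]
  calc _ ≤ 2 * (muF k ℓ m r * GF alpha2 ω r
          + zetaF alpha2 ω E r / (muF k ℓ m r * S r ^ 2)) / (δ * r₀) := by gcongr
    _ ≤ 2 * deriv m r / (δ * r₀) := by gcongr; exact h.muF_mul_GF_add_le_deriv_m hr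
    _ = 2 / (δ * r₀) * deriv m r := by ring

theorem bddAbove_S (h : RegularSolution C alpha2 w k ℓ m S ω E r₀ r₁ δ) :
    BddAbove (S '' Ico r₀ r₁) := by
  obtain ⟨M, hM⟩ := h.bddAbove_m
  set c := 2 / (δ * r₀)
  have hc : 0 ≤ c := by have := h.δ_pos; have := h.r₀_pos; positivity
  have hr₀ : r₀ ∈ Ico r₀ r₁ := ⟨le_rfl, h.r₀_lt_r₁⟩
  refine ⟨S r₀ * Real.exp (c * (M - m r₀)), ?_⟩
  rintro _ ⟨r, hr, rfl⟩
  have hlog := sub_le_sub_of_hasDerivAt_le (f := fun x => Real.log (S x)) (g := fun x => c * m x)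
    (convex_Ico r₀ r₁) (h.contDiffOn_S.continuousOn.log fun x hx => (h.S_pos x hx).ne')
    (continuousOn_const.mul h.contDiffOn_m.continuousOn)
    (by
      rw [interior_Ico]
      exact fun x hx => (h.hasDerivAt_S hx).log (h.S_pos x (Ioo_subset_Ico_self hx)).ne')
    (by rw [interior_Ico]; exact fun x hx => (h.hasDerivAt_m hx).const_mul c)
    (by rw [interior_Ico]; exact fun x hx => h.deriv_S_div_S_le (Ioo_subset_Ico_self hx))
    hr₀ hr hr.1
  have hmM : c * (m r - m r₀) ≤ c * (M - m r₀) := by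
    gcongr; exact hM (mem_image_of_mem m hr)
  calc S r = Real.exp (Real.log (S r)) := (Real.exp_log (h.S_pos r hr)).symm
    _ ≤ Real.exp (Real.log (S r₀) + c * (M - m r₀)) := by gcongr; linarith
    _ = S r₀ * Real.exp (c * (M - m r₀)) := by
      rw [Real.exp_add, Real.exp_log (h.S_pos r₀ hr₀)]

theorem abs_deriv_ω_le (h : RegularSolution C alpha2 w k ℓ m S ω E r₀ r₁ δ)
    (hr : r ∈ Ico r₀ r₁) (i : Fin L) :
    |deriv (ω i) r| ≤ 1 / 2 + alpha2 i / (2 * δ) * deriv m r := by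
  have hα := h.alpha2_pos i
  have hδ := h.δ_pos
  have hG := GF_nonneg (fun j => (h.alpha2_pos j).le) ω r
  have hζ := zetaF_nonneg (fun j => (h.alpha2_pos j).le) ω E r
  have hμ := h.muF_pos hr
  have hGi : deriv (ω i) r ^ 2 / alpha2 i ≤ GF alpha2 ω r :=
    Finset.single_le_sum (f := fun j => deriv (ω j) r ^ 2 / alpha2 j)
      (fun j _ => div_nonneg (sq_nonneg _) (h.alpha2_pos j).le) (Finset.mem_univ i)
  have hδG : δ * GF alpha2 ω r ≤ deriv m r := by
    have : 0 ≤ zetaF alpha2 ω E r / (muF k ℓ m r * S r ^ 2) := by positivity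
    nlinarith [h.muF_mul_GF_add_le_deriv_m hr, h.δ_le_muF r hr]
  have hsq : deriv (ω i) r ^ 2 / 2 ≤ alpha2 i / (2 * δ) * deriv m r := by
    rw [div_le_iff₀ hα] at hGi
    rw [div_mul_eq_mul_div, le_div_iff₀ (by positivity)]
    nlinarith
  nlinarith [sq_nonneg (|deriv (ω i) r| - 1), sq_abs (deriv (ω i) r)]

theorem isBigO_one_and_exists_tendsto_ω (h : RegularSolution C alpha2 w k ℓ m S ω E r₀ r₁ δ)
    (i : Fin L) :
    ω i =O[𝓟 (Ico r₀ r₁)] (fun _ => (1 : ℝ)) ∧ ∃ l, Tendsto (ω i) (𝓝[<] r₁) (𝓝 l) := by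
  set c := alpha2 i / (2 * δ)
  have hc : 0 ≤ c := by have := h.alpha2_pos i; have := h.δ_pos; positivity
  have hg : ContinuousOn (fun x => x / 2 + c * m x) (Ico r₀ r₁) :=
    (continuousOn_id.div_const 2).add (continuousOn_const.mul h.contDiffOn_m.continuousOn)
  have hg' : ∀ x ∈ Ioo r₀ r₁,
      HasDerivAt (fun x => x / 2 + c * m x) (1 / 2 + c * deriv m x) x :=
    fun x hx => ((hasDerivAt_id x).div_const 2).add ((h.hasDerivAt_m hx).const_mul c)
  have hle : ∀ x ∈ Ioo r₀ r₁, |deriv (ω i) x| ≤ 1 / 2 + c * deriv m x :=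
    fun x hx => h.abs_deriv_ω_le (Ioo_subset_Ico_self hx) i
  have hbdd : BddAbove ((fun x => x / 2 + c * m x) '' Ico r₀ r₁) := by
    obtain ⟨M, hM⟩ := h.bddAbove_m
    refine ⟨r₁ / 2 + c * M, ?_⟩
    rintro _ ⟨x, hx, rfl⟩
    have := hM (mem_image_of_mem m hx)
    have := hx.2
    dsimp only
    gcongr
  have hω := (h.contDiffOn_ω i).continuousOn
  exact ⟨isBigO_one_of_abs_hasDerivAt_le hω hg (fun x hx => h.hasDerivAt_ω hx i) hg' hle hbdd,
    exists_tendsto_nhdsLT_of_abs_hasDerivAt_le h.r₀_lt_r₁ hω hg (fun x hx => h.hasDerivAt_ω hx i)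
      hg' hle hbdd⟩

theorem isBigO_S (h : RegularSolution C alpha2 w k ℓ m S ω E r₀ r₁ δ) :
    S =O[𝓟 (Ico r₀ r₁)] (fun _ => (1 : ℝ)) :=
  h.monotoneOn_S.isBigO_one_Ico h.bddAbove_S

theorem isBigO_inv_muF_mul_S (h : RegularSolution C alpha2 w k ℓ m S ω E r₀ r₁ δ) :
    (fun r => (muF k ℓ m r * S r)⁻¹) =O[𝓟 (Ico r₀ r₁)] (fun _ => (1 : ℝ)) := by
  have hr₀ : r₀ ∈ Ico r₀ r₁ := ⟨le_rfl, h.r₀_lt_r₁⟩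
  refine isBigO_inv_one_of_le (mul_pos h.δ_pos (h.S_pos r₀ hr₀)) fun r hr => ?_
  exact mul_le_mul (h.δ_le_muF r hr) (h.monotoneOn_S hr₀ hr hr.1) (h.S_pos r₀ hr₀).le
    (h.muF_pos hr).le

theorem isBigO_inv_sq (h : RegularSolution C alpha2 w k ℓ m S ω E r₀ r₁ δ) :
    (fun r : ℝ => (r ^ 2)⁻¹) =O[𝓟 (Ico r₀ r₁)] (fun _ => (1 : ℝ)) :=
  isBigO_inv_one_of_le (pow_pos h.r₀_pos 2) fun _ hr => pow_le_pow_left₀ h.r₀_pos.le hr.1 2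

theorem hasDerivAt_fluxF (h : RegularSolution C alpha2 w k ℓ m S ω E r₀ r₁ δ)
    (hr : r ∈ Ioo r₀ r₁) (i : Fin L) :
    HasDerivAt (fluxF (Ico r₀ r₁) S E i) (ZF C ω E i r / (muF k ℓ m r * S r)) r := by
  have hr' := Ioo_subset_Ico_self hr
  have hμ := (h.muF_pos hr').ne'
  have hr0 := (h.pos_of_mem hr').ne'
  have hS0 := (h.S_pos r hr').ne'
  have hsq : HasDerivAt (fun x : ℝ => x ^ 2) (2 * r) r := by simpa using hasDerivAt_pow 2 r
  have hquot := (hsq.mul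
    ((h.contDiffOn_E i).hasDerivAt_derivWithin_of_mem_nhds (Ico_mem_nhds_iff.2 hr))).div
    (h.hasDerivAt_S hr) hS0
  refine hquot.congr_deriv ?_
  obtain ⟨-, hS, hE, -⟩ := h.fieldEqnsAt r hr'
  rw [div_eq_iff hS0] at hS
  rw [Pi.mul_apply, derivWithin_of_mem_nhds (Ico_mem_nhds_iff.2 hr), hS,
    eq_sub_of_add_eq (sub_eq_zero.1 (hE i))]
  field_simp
  ring

theorem deriv_E_eq (h : RegularSolution C alpha2 w k ℓ m S ω E r₀ r₁ δ)
    (hr : r ∈ Ioo r₀ r₁) (i : Fin L) :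
    deriv (E i) r = fluxF (Ico r₀ r₁) S E i r * S r / r ^ 2 := by
  have := (h.pos_of_mem (Ioo_subset_Ico_self hr)).ne'
  have := (h.S_pos r (Ioo_subset_Ico_self hr)).ne'
  rw [fluxF, derivWithin_of_mem_nhds (Ico_mem_nhds_iff.2 hr)]
  field_simp

theorem hasDerivAt_sumSq (h : RegularSolution C alpha2 w k ℓ m S ω E r₀ r₁ δ)
    (hr : r ∈ Ioo r₀ r₁) :
    HasDerivAt (sumSq E (fluxF (Ico r₀ r₁) S E))
      (∑ j, (2 * E j r * deriv (E j) r
        + 2 * fluxF (Ico r₀ r₁) S E j r * (ZF C ω E j r / (muF k ℓ m r * S r)))) r := by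
  refine HasDerivAt.fun_sum fun j _ => ?_
  refine (((h.hasDerivAt_E hr j).fun_pow 2).add
    ((h.hasDerivAt_fluxF hr j).fun_pow 2)).congr_deriv ?_
  norm_num

theorem isBigO_deriv_sumSq (h : RegularSolution C alpha2 w k ℓ m S ω E r₀ r₁ δ) :
    (fun r => ∑ j, (2 * E j r * deriv (E j) r
        + 2 * fluxF (Ico r₀ r₁) S E j r * (ZF C ω E j r / (muF k ℓ m r * S r))))
      =O[𝓟 (Ioo r₀ r₁)] sumSq E (fluxF (Ico r₀ r₁) S E) := by
  set Q := fluxF (Ico r₀ r₁) S E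
  have hIoo : 𝓟 (Ioo r₀ r₁) ≤ 𝓟 (Ico r₀ r₁) := principal_mono.2 Ioo_subset_Ico_self
  have hEQ : ∀ i j, (fun r => E i r * Q j r) =O[𝓟 (Ioo r₀ r₁)] sumSq E Q := fun i j =>
    IsBigO.of_bound' (Eventually.of_forall fun r => by
      simpa [abs_of_nonneg (sumSq_nonneg E Q r)] using abs_mul_le_sumSq E Q i j r)
  have hω : ∀ l, ω l =O[𝓟 (Ioo r₀ r₁)] (fun _ => (1 : ℝ)) := fun l =>
    (h.isBigO_one_and_exists_tendsto_ω l).1.mono hIoo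
  -- each term is some `Eₗ Qⱼ`, at most `W`, times a bounded coefficient
  refine IsBigO.fun_sum fun j _ => IsBigO.add ?_ ?_
  · have hcoef := ((h.isBigO_S.const_mul_left 2).mul h.isBigO_inv_sq).mono hIoo
    refine ((hEQ j j).mul hcoef).congr' ?_ (by simp)
    filter_upwards [mem_principal_self _] with r hr
    rw [h.deriv_E_eq hr]
    ring
  · refine IsBigO.congr' (f₁ := fun r => ∑ l, E l r * Q j r
        * (2 * C j l * ω l r ^ 2 * (muF k ℓ m r * S r)⁻¹)) ?_ ?_ (by rfl)
    · refine IsBigO.fun_sum fun l _ => ?_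
      have hcoef := ((((hω l).pow 2).const_mul_left (2 * C j l)).mul
        (h.isBigO_inv_muF_mul_S.mono hIoo))
      simpa using (hEQ l j).mul hcoef
    · refine Eventually.of_forall fun r => ?_
      simp only [ZF, Finset.sum_div, Finset.mul_sum]
      exact Finset.sum_congr rfl fun l _ => by ring

theorem bddAbove_sumSq (h : RegularSolution C alpha2 w k ℓ m S ω E r₀ r₁ δ) :
    BddAbove (sumSq E (fluxF (Ico r₀ r₁) S E) '' Ico r₀ r₁) := by
  set W := sumSq E (fluxF (Ico r₀ r₁) S E)
  obtain ⟨K, hK⟩ := isBigO_principal.1 h.isBigO_deriv_sumSq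
  have hW : ContinuousOn W (Ico r₀ r₁) := by
    refine continuousOn_finsetSum _ fun j _ => ((h.contDiffOn_E j).continuousOn.pow 2).add ?_
    refine ContinuousOn.pow ?_ 2
    exact (continuousOn_pow 2).mul ((h.contDiffOn_E j).continuousOn_derivWithin
      (uniqueDiffOn_Ico r₀ r₁) (by norm_num)) |>.div h.contDiffOn_S.continuousOn
      fun r hr => (h.S_pos r hr).ne'
  have hr₀ : r₀ ∈ Ico r₀ r₁ := ⟨le_rfl, h.r₀_lt_r₁⟩
  refine ⟨W r₀ * Real.exp (|K| * (r₁ - r₀)), ?_⟩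
  rintro _ ⟨r, hr, rfl⟩
  have hgrowth := le_mul_exp_of_hasDerivAt_le_mul (convex_Ico r₀ r₁) hW
    (by rw [interior_Ico]; exact fun x hx => h.hasDerivAt_sumSq hx)
    (by
      rw [interior_Ico]
      intro x hx
      have := hK x hx
      rw [Real.norm_eq_abs, Real.norm_eq_abs, abs_of_nonneg (sumSq_nonneg _ _ x)] at this
      exact (le_abs_self _).trans this)
    hr₀ hr hr.1
  refine hgrowth.trans (mul_le_mul_of_nonneg_left ?_ (sumSq_nonneg _ _ _))
  exact Real.exp_le_exp.2 (mul_le_mul (le_abs_self K) (by linarith [hr.2]) (by linarith [hr.1])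
    (abs_nonneg K))

theorem isBigO_fluxF (h : RegularSolution C alpha2 w k ℓ m S ω E r₀ r₁ δ) (j : Fin L) :
    fluxF (Ico r₀ r₁) S E j =O[𝓟 (Ico r₀ r₁)] (fun _ => (1 : ℝ)) := by
  obtain ⟨B, hB⟩ := h.bddAbove_sumSq
  refine isBigO_one_principal_iff.2 ⟨1 + B, fun r hr => ?_⟩
  have hW := hB (mem_image_of_mem _ hr)
  have hj := sq_le_sumSq E (fluxF (Ico r₀ r₁) S E) j r
  nlinarith [sq_nonneg (|fluxF (Ico r₀ r₁) S E j r| - 1), sq_abs (fluxF (Ico r₀ r₁) S E j r),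
    sq_nonneg (E j r)]

theorem isBigO_deriv_E (h : RegularSolution C alpha2 w k ℓ m S ω E r₀ r₁ δ) (j : Fin L) :
    deriv (E j) =O[𝓟 (Ioo r₀ r₁)] (fun _ => (1 : ℝ)) := by
  refine (((h.isBigO_fluxF j).mul h.isBigO_S).mul h.isBigO_inv_sq |>.mono
    (principal_mono.2 Ioo_subset_Ico_self)).congr' ?_ (by simp)
  filter_upwards [mem_principal_self _] with r hr
  rw [h.deriv_E_eq hr, div_eq_mul_inv]

theorem isBigO_one_and_exists_tendsto_E (h : RegularSolution C alpha2 w k ℓ m S ω E r₀ r₁ δ)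
    (i : Fin L) :
    E i =O[𝓟 (Ico r₀ r₁)] (fun _ => (1 : ℝ)) ∧ ∃ l, Tendsto (E i) (𝓝[<] r₁) (𝓝 l) :=
  isBigO_one_and_exists_tendsto_of_hasDerivAt h.r₀_lt_r₁ (h.contDiffOn_E i).continuousOn
    (fun _ hx => h.hasDerivAt_E hx i) (h.isBigO_deriv_E i)

theorem isBigO_FF (h : RegularSolution C alpha2 w k ℓ m S ω E r₀ r₁ δ) (i : Fin L) :
    (fun r => FF C w k ω i r) =O[𝓟 (Ico r₀ r₁)] (fun _ => (1 : ℝ)) := by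
  have hω : ∀ l, ω l =O[𝓟 (Ico r₀ r₁)] (fun _ => (1 : ℝ)) := fun l =>
    (h.isBigO_one_and_exists_tendsto_ω l).1
  have hconst : ∀ c : ℝ, (fun _ => c) =O[𝓟 (Ico r₀ r₁)] (fun _ => (1 : ℝ)) := fun c =>
    isBigO_const_const c one_ne_zero _
  have hω2 : ∀ l, (fun r => ω l r ^ 2) =O[𝓟 (Ico r₀ r₁)] (fun _ => (1 : ℝ)) := fun l => by
    simpa using (hω l).pow 2
  have hsum := IsBigO.fun_sum (s := Finset.univ) fun j _ =>
    (hconst (C i j)).mul ((hconst (k * w j)).sub (hω2 j))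
  simpa [FF, div_eq_mul_inv] using ((hω i).mul (hconst 2⁻¹)).mul hsum

theorem continuousOn_muF (h : RegularSolution C alpha2 w k ℓ m S ω E r₀ r₁ δ) :
    ContinuousOn (muF k ℓ m) (Ico r₀ r₁) :=
  (continuousOn_const.sub ((continuousOn_const.mul h.contDiffOn_m.continuousOn).div continuousOn_id
    fun _ hr => (h.pos_of_mem hr).ne')).add (by fun_prop)

theorem hasDerivAt_muF_mul_S_mul_derivWithin_ω
    (h : RegularSolution C alpha2 w k ℓ m S ω E r₀ r₁ δ) (hr : r ∈ Ioo r₀ r₁) (i : Fin L) :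
    HasDerivAt (fun x => muF k ℓ m x * S x * derivWithin (ω i) (Ico r₀ r₁) x)
      (-(E i r ^ 2 * ω i r / (muF k ℓ m r * S r)) - S r * FF C w k ω i r / r ^ 2) r := by
  have hr' := Ioo_subset_Ico_self hr
  have hμ := (h.muF_pos hr').ne'
  have hr0 := (h.pos_of_mem hr').ne'
  have hS0 := (h.S_pos r hr').ne'
  have hprod := ((hasDerivAt_muF (k := k) (ℓ := ℓ) (h.hasDerivAt_m hr) hr0).mul
    (h.hasDerivAt_S hr)).mul
    ((h.contDiffOn_ω i).hasDerivAt_derivWithin_of_mem_nhds (Ico_mem_nhds_iff.2 hr))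
  refine hprod.congr_deriv ?_
  obtain ⟨hm, hS, -, hω⟩ := h.fieldEqnsAt r hr'
  rw [div_eq_iff hS0] at hS
  have hω'' : deriv (deriv (ω i)) r =
      (-(2 * (m r - PF C alpha2 w k ω r / r - r ^ 3 * etaF C alpha2 E r / S r ^ 2
          + r ^ 3 / ℓ ^ 2) * deriv (ω i) r)
        - r ^ 2 * E i r ^ 2 * ω i r / (muF k ℓ m r * S r ^ 2) - FF C w k ω i r)
      / (r ^ 2 * muF k ℓ m r) := by
    rw [eq_div_iff (by positivity)]
    linear_combination hω i
  rw [Pi.mul_apply, derivWithin_of_mem_nhds (Ico_mem_nhds_iff.2 hr), hω'', hS, hm]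
  field_simp
  ring

theorem isBigO_deriv_ω (h : RegularSolution C alpha2 w k ℓ m S ω E r₀ r₁ δ) (i : Fin L) :
    deriv (ω i) =O[𝓟 (Ioo r₀ r₁)] (fun _ => (1 : ℝ)) := by
  have hIoo : 𝓟 (Ioo r₀ r₁) ≤ 𝓟 (Ico r₀ r₁) := principal_mono.2 Ioo_subset_Ico_self
  have hω := (h.isBigO_one_and_exists_tendsto_ω i).1
  have hE := (h.isBigO_one_and_exists_tendsto_E i).1
  -- `v = μ S ω'` has a bounded derivative, hence is bounded, and `μ S` is bounded below.
  have hv' : (fun r => -(E i r ^ 2 * ω i r / (muF k ℓ m r * S r)) - S r * FF C w k ω i r / r ^ 2)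
      =O[𝓟 (Ioo r₀ r₁)] (fun _ => (1 : ℝ)) := by
    have h₁ := (((by simpa using hE.pow 2 : (fun r => E i r ^ 2) =O[𝓟 (Ico r₀ r₁)]
      (fun _ => (1 : ℝ))).mul hω).mul h.isBigO_inv_muF_mul_S)
    have h₂ := (h.isBigO_S.mul (h.isBigO_FF i)).mul h.isBigO_inv_sq
    simpa [div_eq_mul_inv] using (h₁.neg_left.sub h₂).mono hIoo
  have hv := (isBigO_one_and_exists_tendsto_of_hasDerivAt h.r₀_lt_r₁
    ((h.continuousOn_muF.mul h.contDiffOn_S.continuousOn).mul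
      ((h.contDiffOn_ω i).continuousOn_derivWithin (uniqueDiffOn_Ico r₀ r₁) (by norm_num)))
    (fun _ hx => h.hasDerivAt_muF_mul_S_mul_derivWithin_ω hx i) hv').1
  refine ((hv.mul h.isBigO_inv_muF_mul_S).mono hIoo).congr' ?_ (by simp)
  filter_upwards [mem_principal_self _] with r hr
  have := (h.muF_pos (Ioo_subset_Ico_self hr)).ne'
  have := (h.S_pos r (Ioo_subset_Ico_self hr)).ne'
  rw [Pi.mul_apply, Pi.mul_apply, derivWithin_of_mem_nhds (Ico_mem_nhds_iff.2 hr)]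
  field_simp

end RegularSolution

theorem global_regularity_general
    (L : ℕ)
    (C : Matrix (Fin L) (Fin L) ℝ)
    (alpha2 : Fin L → ℝ) (halpha : ∀ j, 0 < alpha2 j)
    (hposdef : (Matrix.of fun i j => 2 * C i j / alpha2 j).PosDef)
    (w : Fin L → ℝ)
    (k : ℝ)
    (ℓ : ℝ)
    (r₀ r₁ : ℝ) (hr₀ : 0 < r₀) (hr : r₀ < r₁)
    (m S : ℝ → ℝ) (ω E : Fin L → ℝ → ℝ)
    (hreg : ContDiffOn ℝ 2 m (Set.Ico r₀ r₁) ∧ ContDiffOn ℝ 2 S (Set.Ico r₀ r₁) ∧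
      ∀ i, ContDiffOn ℝ 2 (ω i) (Set.Ico r₀ r₁) ∧ ContDiffOn ℝ 2 (E i) (Set.Ico r₀ r₁))
    (hFE : ∀ r ∈ Set.Ico r₀ r₁, FieldEqnsAt C alpha2 w k ℓ m S ω E r)
    (hSpos : ∀ r ∈ Set.Ico r₀ r₁, 0 < S r)
    (hμ : ∃ δ > (0 : ℝ), ∀ r ∈ Set.Ico r₀ r₁, δ ≤ muF k ℓ m r) :
    MonotoneOn m (Set.Ico r₀ r₁) ∧ (∃ Cm, ∀ r ∈ Set.Ico r₀ r₁, |m r| ≤ Cm) ∧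
    MonotoneOn S (Set.Ico r₀ r₁) ∧ (∃ Cs, ∀ r ∈ Set.Ico r₀ r₁, |S r| ≤ Cs) ∧
    (∀ i, ∃ Cb, ∀ r ∈ Set.Ico r₀ r₁,
      |ω i r| ≤ Cb ∧ |deriv (ω i) r| ≤ Cb ∧ |E i r| ≤ Cb ∧ |deriv (E i) r| ≤ Cb) ∧
    (∃ mlim Slim : ℝ, Tendsto m (nhdsWithin r₁ (Set.Iio r₁)) (nhds mlim) ∧
      Tendsto S (nhdsWithin r₁ (Set.Iio r₁)) (nhds Slim)) ∧
    (∀ i, ∃ ωlim Elim : ℝ, Tendsto (ω i) (nhdsWithin r₁ (Set.Iio r₁)) (nhds ωlim) ∧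
      Tendsto (E i) (nhdsWithin r₁ (Set.Iio r₁)) (nhds Elim)) := by
  obtain ⟨hm, hS, hωE⟩ := hreg
  obtain ⟨δ, hδ, hμδ⟩ := hμ
  have h : RegularSolution C alpha2 w k ℓ m S ω E r₀ r₁ δ :=
    ⟨halpha, hposdef, hr₀, hr, hm, hS, fun i => (hωE i).1, fun i => (hωE i).2, hFE, hSpos, hδ,
      hμδ⟩
  obtain ⟨mlim, hmlim⟩ := h.monotoneOn_m.exists_tendsto_nhdsLT_Ico hr h.bddAbove_m
  obtain ⟨Slim, hSlim⟩ := h.monotoneOn_S.exists_tendsto_nhdsLT_Ico hr h.bddAbove_S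
  refine ⟨h.monotoneOn_m,
    isBigO_one_principal_iff.1 (h.monotoneOn_m.isBigO_one_Ico h.bddAbove_m), h.monotoneOn_S,
    isBigO_one_principal_iff.1 h.isBigO_S, fun i => ?_, ⟨mlim, Slim, hmlim, hSlim⟩, fun i => ?_⟩
  · obtain ⟨B₁, h₁⟩ := isBigO_one_principal_iff.1 (h.isBigO_one_and_exists_tendsto_ω i).1
    obtain ⟨B₂, h₂⟩ := isBigO_one_principal_iff.1 (isBigO_one_Ico_of_Ioo (h.isBigO_deriv_ω i))
    obtain ⟨B₃, h₃⟩ := isBigO_one_principal_iff.1 (h.isBigO_one_and_exists_tendsto_E i).1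
    obtain ⟨B₄, h₄⟩ := isBigO_one_principal_iff.1 (isBigO_one_Ico_of_Ioo (h.isBigO_deriv_E i))
    exact ⟨max (max B₁ B₂) (max B₃ B₄), fun r hr => ⟨(h₁ r hr).trans (by simp),
      (h₂ r hr).trans (by simp), (h₃ r hr).trans (by simp), (h₄ r hr).trans (by simp)⟩⟩
  · obtain ⟨ωlim, hωlim⟩ := (h.isBigO_one_and_exists_tendsto_ω i).2
    obtain ⟨Elim, hElim⟩ := (h.isBigO_one_and_exists_tendsto_E i).2
    exact ⟨ωlim, Elim, hωlim, hElim⟩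

/-- global regularity: a C² solution on `[r₀, r₁)` with `S(r₀) > 0` and
`inf μ > 0` has `m`, `S` nondecreasing and bounded, all gauge functions and their first
derivatives bounded, and all field variables extend (have limits) at `r = r₁`. -/
theorem global_regularity
    (L : ℕ) (hL : 1 ≤ L)
    (C : Matrix (Fin L) (Fin L) ℝ) (hC : IsUnit C.det)
    (alpha2 : Fin L → ℝ) (halpha : ∀ j, 0 < alpha2 j)
    (hposdef : (Matrix.of fun i j => 2 * C i j / alpha2 j).PosDef)
    (w : Fin L → ℝ) (hw : ∀ j, 0 < w j)
    (k : ℝ) (hk : k = -1 ∨ k = 0 ∨ k = 1)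
    (ℓ : ℝ) (hℓ : 0 < ℓ)
    (r₀ r₁ : ℝ) (hr₀ : 0 < r₀) (hr : r₀ < r₁)
    (m S : ℝ → ℝ) (ω E : Fin L → ℝ → ℝ)
    (hreg : ContDiffOn ℝ 2 m (Set.Ico r₀ r₁) ∧ ContDiffOn ℝ 2 S (Set.Ico r₀ r₁) ∧
      ∀ i, ContDiffOn ℝ 2 (ω i) (Set.Ico r₀ r₁) ∧ ContDiffOn ℝ 2 (E i) (Set.Ico r₀ r₁))
    (hFE : ∀ r ∈ Set.Ico r₀ r₁, FieldEqnsAt C alpha2 w k ℓ m S ω E r)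
    (hS₀ : 0 < S r₀) (hSpos : ∀ r ∈ Set.Ico r₀ r₁, 0 < S r)
    (hμ : ∃ δ > (0 : ℝ), ∀ r ∈ Set.Ico r₀ r₁, δ ≤ muF k ℓ m r) :
    MonotoneOn m (Set.Ico r₀ r₁) ∧ (∃ Cm, ∀ r ∈ Set.Ico r₀ r₁, |m r| ≤ Cm) ∧
    MonotoneOn S (Set.Ico r₀ r₁) ∧ (∃ Cs, ∀ r ∈ Set.Ico r₀ r₁, |S r| ≤ Cs) ∧
    (∀ i, ∃ Cb, ∀ r ∈ Set.Ico r₀ r₁,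
      |ω i r| ≤ Cb ∧ |deriv (ω i) r| ≤ Cb ∧ |E i r| ≤ Cb ∧ |deriv (E i) r| ≤ Cb) ∧
    (∃ mlim Slim : ℝ, Tendsto m (nhdsWithin r₁ (Set.Iio r₁)) (nhds mlim) ∧
      Tendsto S (nhdsWithin r₁ (Set.Iio r₁)) (nhds Slim)) ∧
    (∀ i, ∃ ωlim Elim : ℝ, Tendsto (ω i) (nhdsWithin r₁ (Set.Iio r₁)) (nhds ωlim) ∧
      Tendsto (E i) (nhdsWithin r₁ (Set.Iio r₁)) (nhds Elim)) :=
  global_regularity_general L C alpha2 halpha hposdef w k ℓ r₀ r₁ hr₀ hr m S ω E hreg hFE hSpos hμ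
end
end

section
/- For any constant M ∈ ℝ, the configuration ω_i(r) ≡ 0, E_i(r) ≡ 0, S(r) ≡ 1, m(r) = M − Q²/(2r), where Q² = (k²/4) Σ_{i,j} w_i h_{ij} w_j ≥ 0, satisfies the field equations on any interval of r > 0 on which μ(r) = k − 2M/r + Q²/r² + r²/ℓ² > 0. This is the embedded Reissner–Nordström–anti-de Sitter solution; it exists only with this value of Q², and for k = 0 it necessarily has zero magnetic charge. -/
noncomputable section

open Filter Asymptotics

/-
With `ω ≡ 0`, `E ≡ 0`, `S ≡ 1` every Yang–Mills source term vanishes except the potential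
`P = (k²/8) wᵀ h w = Q²/2`, and all field equations but the first hold trivially. The first reduces
to `m′ = P/r²`, which `m = M − c/(2r)` satisfies exactly when `c = 2P = Q²`; and `Q² ≥ 0`
because `h` is positive semidefinite.
-/

open Matrix

theorem Matrix.PosSemidef.sum_mul_mul_nonneg_s17 {n : Type*} [Fintype n] {A : Matrix n n ℝ}
    (hA : A.PosSemidef) (x : n → ℝ) : 0 ≤ ∑ i, ∑ j, x i * A i j * x j := by
  have := hA.dotProduct_mulVec_nonneg x
  simpa [dotProduct, mulVec, Finset.mul_sum, mul_assoc] using this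

theorem deriv_const_sub_div_two_mul (M c : ℝ) {r : ℝ} (hr : r ≠ 0) :
    deriv (fun r => M - c / (2 * r)) r = c / (2 * r ^ 2) := by
  have hfun : (fun r : ℝ => M - c / (2 * r)) = fun r => M - c / 2 * r⁻¹ := by
    funext x; ring
  rw [hfun, (((hasDerivAt_inv hr).const_mul (c / 2)).const_sub M).deriv]
  ring

section TrivialYangMills

variable {L : ℕ} (C : Matrix (Fin L) (Fin L) ℝ) (alpha2 w : Fin L → ℝ) (k : ℝ)

theorem PF_zero (r : ℝ) :
    PF C alpha2 w k (fun _ _ => 0) r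
      = k ^ 2 / 8 * ∑ i, ∑ j, w i * (2 * C i j / alpha2 j) * w j := by
  simp only [PF, Finset.mul_sum]
  refine Finset.sum_congr rfl fun i _ => Finset.sum_congr rfl fun j _ => ?_
  ring

theorem fieldEqnsAt_trivial_iff (ℓ : ℝ) (m : ℝ → ℝ) (r : ℝ) :
    FieldEqnsAt C alpha2 w k ℓ m (fun _ => 1) (fun _ _ => 0) (fun _ _ => 0) r
      ↔ deriv m r = PF C alpha2 w k (fun _ _ => 0) r / r ^ 2 := by
  simp [FieldEqnsAt, etaF, zetaF, GF, ZF, FF]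

end TrivialYangMills

theorem embedded_RNadS_solution_general
    (L : ℕ)
    (C : Matrix (Fin L) (Fin L) ℝ)
    (alpha2 : Fin L → ℝ)
    (hposdef : (Matrix.of fun i j => 2 * C i j / alpha2 j).PosDef)
    (w : Fin L → ℝ)
    (k : ℝ)
    (ℓ : ℝ)
    (M Q2 : ℝ)
    (hQ2 : Q2 = (k ^ 2 / 4) * ∑ i, ∑ j, w i * (2 * C i j / alpha2 j) * w j)
    (m S : ℝ → ℝ) (ω E : Fin L → ℝ → ℝ)
    (hm : m = fun r => M - Q2 / (2 * r)) (hS : S = fun _ => 1)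
    (hω : ω = fun _ _ => 0) (hE : E = fun _ _ => 0) :
    (∀ r : ℝ, 0 < r → 0 < muF k ℓ m r → FieldEqnsAt C alpha2 w k ℓ m S ω E r) ∧
    (∀ r : ℝ, 0 < r → muF k ℓ m r = k - 2 * M / r + Q2 / r ^ 2 + r ^ 2 / ℓ ^ 2) ∧
    0 ≤ Q2 ∧
    (k = 0 → Q2 = 0) ∧
    (∀ c : ℝ, ∀ r : ℝ, 0 < r → 0 < muF k ℓ (fun r => M - c / (2 * r)) r →
      FieldEqnsAt C alpha2 w k ℓ (fun r => M - c / (2 * r)) S ω E r → c = Q2) := by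
  subst hm hS hω hE
  have hP : PF C alpha2 w k (fun _ _ => 0) = fun _ => Q2 / 2 := by
    funext r
    rw [PF_zero, hQ2]
    ring
  refine ⟨fun r hr _ => ?_, fun r hr => ?_, ?_, fun hk0 => ?_, fun c r hr _ hc => ?_⟩
  · rw [fieldEqnsAt_trivial_iff, deriv_const_sub_div_two_mul M Q2 hr.ne', hP]
    field_simp
  · simp only [muF]
    field_simp
    ring
  · rw [hQ2]
    exact mul_nonneg (by positivity) (hposdef.posSemidef.sum_mul_mul_nonneg_s17 w)
  · simp [hQ2, hk0]
  · rw [fieldEqnsAt_trivial_iff, deriv_const_sub_div_two_mul M c hr.ne', hP] at hc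
    field_simp at hc
    linarith

/-- the embedded Reissner–Nördstrom–anti-de Sitter solution:
`ωᵢ ≡ 0`, `Eᵢ ≡ 0`, `S ≡ 1`, `m(r) = M − Q²/(2r)` with
`Q² = (k²/4) Σᵢⱼ wᵢ hᵢⱼ wⱼ ≥ 0` solves the field equations wherever `r > 0` and `μ > 0`;
it exists only with this value of `Q²`, and for `k = 0` it has zero magnetic charge. -/
theorem embedded_RNadS_solution
    (L : ℕ) (hL : 1 ≤ L)
    (C : Matrix (Fin L) (Fin L) ℝ) (hC : IsUnit C.det)
    (alpha2 : Fin L → ℝ) (halpha : ∀ j, 0 < alpha2 j)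
    (hposdef : (Matrix.of fun i j => 2 * C i j / alpha2 j).PosDef)
    (w : Fin L → ℝ) (hw : ∀ j, 0 < w j)
    (k : ℝ) (hk : k = -1 ∨ k = 0 ∨ k = 1)
    (ℓ : ℝ) (hℓ : 0 < ℓ)
    (M Q2 : ℝ)
    (hQ2 : Q2 = (k ^ 2 / 4) * ∑ i, ∑ j, w i * (2 * C i j / alpha2 j) * w j)
    (m S : ℝ → ℝ) (ω E : Fin L → ℝ → ℝ)
    (hm : m = fun r => M - Q2 / (2 * r)) (hS : S = fun _ => 1)
    (hω : ω = fun _ _ => 0) (hE : E = fun _ _ => 0) :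
    (∀ r : ℝ, 0 < r → 0 < muF k ℓ m r → FieldEqnsAt C alpha2 w k ℓ m S ω E r) ∧
    (∀ r : ℝ, 0 < r → muF k ℓ m r = k - 2 * M / r + Q2 / r ^ 2 + r ^ 2 / ℓ ^ 2) ∧
    0 ≤ Q2 ∧
    (k = 0 → Q2 = 0) ∧
    (∀ c : ℝ, ∀ r : ℝ, 0 < r → 0 < muF k ℓ (fun r => M - c / (2 * r)) r →
      FieldEqnsAt C alpha2 w k ℓ (fun r => M - c / (2 * r)) S ω E r → c = Q2) :=
  embedded_RNadS_solution_general L C alpha2 hposdef w k ℓ M Q2 hQ2 m S ω E hm hS hω hE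
end
end

section
/- Let L ≥ 1 and let C be the L×L Cartan matrix of type A_L, i.e. C_{ii} = 2, C_{i,i+1} = C_{i+1,i} = −1, and C_{ij} = 0 for |i − j| ≥ 2. Then: (a) the constants w_j := 2 Σ_{k=1}^L (C⁻¹)_{jk} satisfy w_j = j(L + 1 − j) for j = 1,…,L; and (b) the symmetric matrix T with entries T_{ij} = √(w_i) C_{ij} √(w_j) has characteristic polynomial ∏_{j=1}^L (x − j(j+1)); in particular, the spectrum of T is exactly {j(j+1) : j = 1,…,L}. -/
/-! Put `w_j = j (L + 1 - j)`. Since `C w = 2 · 𝟙`, part (a) follows once `C` is invertible.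
With `D = diag(√w)` we have `T = D C D`, which has the same characteristic polynomial as
`diag(w) C`. On `(f 1, …, f L)` with `f 0 = f (L + 1) = 0`, the matrix `diag(w) C` acts as the
difference operator `f ↦ t (L + 1 - t) (2 f(t) - f(t - 1) - f(t + 1))`, which sends the falling
factorial of degree `r` to `r (r - 1)` times itself plus a multiple of the one of degree `r - 1`.
Hence for `n = 2, …, L + 1` it has a monic polynomial eigenfunction of degree `n` with eigenvalue
`n (n - 1) ≠ 0`; the eigenvalue equation at `t = 0` and `t = L + 1` forces it to vanish there, and
by degree it cannot vanish at all of `0, …, L + 1`. These `L` distinct eigenvalues exhaust the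
characteristic polynomial, and none is `0`, so `C` is invertible. -/

noncomputable section

open Polynomial

open scoped Matrix

theorem Polynomial.Monic.eq_prod_X_sub_C_of_isRoot {K ι : Type*} [Field K] [Fintype ι]
    {p : K[X]} (hp : p.Monic) (hdeg : p.natDegree = Fintype.card ι) {f : ι → K}
    (hf : Function.Injective f) (hroot : ∀ i, p.IsRoot (f i)) :
    p = ∏ i, (X - C (f i)) := by
  have hmonic : ∀ i ∈ Finset.univ, (X - C (f i)).Monic := fun i _ => monic_X_sub_C _
  refine eq_of_monic_of_dvd_of_natDegree_le (monic_prod_of_monic _ _ hmonic) hp ?_ ?_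
  · exact Finset.prod_dvd_of_coprime ((pairwise_coprime_X_sub_C hf).set_pairwise _)
      fun i _ => dvd_iff_isRoot.mpr (hroot i)
  · simp [natDegree_prod_of_monic _ _ hmonic, hdeg]

namespace Matrix

variable {K n : Type*} [Field K] [Fintype n] [DecidableEq n]

theorem isRoot_charpoly_of_mulVec_eq_smul {A : Matrix n n K} {y : n → K} {μ : K} (hy : y ≠ 0)
    (h : A *ᵥ y = μ • y) : A.charpoly.IsRoot μ := by
  rw [IsRoot, eval_charpoly, ← exists_mulVec_eq_zero_iff]
  exact ⟨y, hy, by simp [sub_mulVec, h]⟩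

theorem spectrum_eq_range_of_charpoly_eq_prod {ι : Type*} [Fintype ι] {A : Matrix n n K}
    {f : ι → K} (h : A.charpoly = ∏ i, (X - C (f i))) : spectrum K A = Set.range f := by
  ext μ
  simp [mem_spectrum_iff_isRoot_charpoly, h, eval_prod, Finset.prod_eq_zero_iff, sub_eq_zero,
    eq_comm (a := μ)]

end Matrix

section FallingFactorial

variable {R : Type*} [CommRing R]

theorem descPochhammer_eval_add_one_sub (n : ℕ) (t : R) :
    (descPochhammer R (n + 1)).eval (t + 1) - (descPochhammer R (n + 1)).eval t
      = (n + 1) * (descPochhammer R n).eval t := by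
  have hleft :
      (descPochhammer R (n + 1)).eval (t + 1) = (t + 1) * (descPochhammer R n).eval t := by
    simp [descPochhammer_succ_left]
  rw [hleft, descPochhammer_succ_eval]
  ring

theorem mul_descPochhammer_eval_sub_eval_sub_one (n : ℕ) (t : R) :
    t * ((descPochhammer R n).eval t - (descPochhammer R n).eval (t - 1))
      = n * (descPochhammer R n).eval t := by
  cases n with
  | zero => simp
  | succ n =>
    have hdiff := descPochhammer_eval_add_one_sub n (t - 1)
    rw [sub_add_cancel] at hdiff
    rw [hdiff, descPochhammer_succ_left]
    simp only [eval_mul, eval_X, eval_comp, eval_sub, eval_one]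
    push_cast
    ring

end FallingFactorial

section WeightedLaplacian

variable {R : Type*} [CommRing R]

def weightedLaplacian (N : R) (f : R → R) (t : R) : R :=
  t * (N - t) * (2 * f t - f (t - 1) - f (t + 1))

theorem weightedLaplacian_sum {ι : Type*} (N : R) (s : Finset ι) (c : ι → R)
    (f : ι → R → R) (t : R) : weightedLaplacian N (fun x => ∑ i ∈ s, c i * f i x) t
      = ∑ i ∈ s, c i * weightedLaplacian N (f i) t := by
  simp only [weightedLaplacian, Finset.mul_sum, ← Finset.sum_sub_distrib]
  exact Finset.sum_congr rfl fun i _ => by ring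

theorem weightedLaplacian_descPochhammer (N : R) (q : ℕ) (t : R) :
    weightedLaplacian N (descPochhammer R (q + 1)).eval t
      = (q + 1) * q * (descPochhammer R (q + 1)).eval t
        - (q + 1) * q * (N - q) * (descPochhammer R q).eval t := by
  have hfwd := descPochhammer_eval_add_one_sub q t
  have hbwd := mul_descPochhammer_eval_sub_eval_sub_one (q + 1) t
  have hsucc := descPochhammer_succ_eval q t
  push_cast at hbwd
  unfold weightedLaplacian
  linear_combination (N - t) * hbwd - t * (N - t) * hfwd
    + ((N - t) * (q + 1) - (q + 1) * q) * hsucc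

theorem apply_eq_zero_of_weightedLaplacian_eq_mul [IsDomain R] {N μ t : R} {f : R → R}
    (hμ : μ ≠ 0) (h : weightedLaplacian N f t = μ * f t) (ht : t * (N - t) = 0) : f t = 0 := by
  rw [weightedLaplacian, ht, zero_mul, eq_comm, mul_eq_zero] at h
  exact h.resolve_left hμ

end WeightedLaplacian

section Eigenpolynomial

variable {R : Type*} [CommRing R]

theorem monic_sum_smul_descPochhammer [IsDomain R] {a : ℕ → R} {m : ℕ} (ha : a (m + 1) = 1) :
    let P := ∑ q ∈ Finset.range (m + 1), a (q + 1) • descPochhammer R (q + 1)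
    P.Monic ∧ P.natDegree = m + 1 := by
  have hdeg : ∀ r, (descPochhammer R r).degree = r := fun r => by
    rw [degree_eq_natDegree (monic_descPochhammer R r).ne_zero, descPochhammer_natDegree]
  have hlow : (∑ q ∈ Finset.range m, a (q + 1) • descPochhammer R (q + 1)).degree
      < (descPochhammer R (m + 1)).degree := by
    rw [hdeg, ← mem_degreeLT]
    refine Submodule.sum_mem _ fun q hq => Submodule.smul_mem _ _ ?_
    rw [mem_degreeLT, hdeg]
    exact_mod_cast Nat.add_lt_add_right (Finset.mem_range.mp hq) 1
  rw [Finset.sum_range_succ, ha, one_smul]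
  exact ⟨(monic_descPochhammer R _).add_of_right hlow,
    by rw [natDegree_add_eq_right_of_degree_lt hlow, descPochhammer_natDegree]⟩

theorem weightedLaplacian_sum_smul_descPochhammer (N : R) {a : ℕ → R} {m : ℕ}
    (ha : ∀ q < m, a (q + 1) * ((q + 1) * q - (m + 1) * m)
      = a (q + 2) * ((q + 2) * (q + 1) * (N - (q + 1)))) (t : R) :
    let P := ∑ q ∈ Finset.range (m + 1), a (q + 1) • descPochhammer R (q + 1)
    weightedLaplacian N P.eval t = (m + 1) * m * P.eval t := by
  set f : ℕ → R := fun r => (descPochhammer R r).eval t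
  set x : ℕ → R := fun q => a (q + 1) * ((q + 1) * q - (m + 1) * m) * f (q + 1)
  set y : ℕ → R := fun q => a (q + 1) * ((q + 1) * q * (N - q)) * f q
  simp only [eval_finsetSum, eval_smul, smul_eq_mul]
  rw [weightedLaplacian_sum, ← sub_eq_zero, Finset.mul_sum, ← Finset.sum_sub_distrib]
  calc ∑ q ∈ Finset.range (m + 1),
        (a (q + 1) * weightedLaplacian N (descPochhammer R (q + 1)).eval t
          - (m + 1) * m * (a (q + 1) * f (q + 1)))
      = ∑ q ∈ Finset.range (m + 1), x q - ∑ q ∈ Finset.range (m + 1), y q := by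
        rw [← Finset.sum_sub_distrib]
        refine Finset.sum_congr rfl fun q _ => ?_
        rw [weightedLaplacian_descPochhammer]
        ring
    _ = ∑ q ∈ Finset.range m, x q - ∑ q ∈ Finset.range m, y (q + 1) := by
        rw [Finset.sum_range_succ, Finset.sum_range_succ']
        simp [x, y]
    _ = 0 := by
        rw [sub_eq_zero]
        refine Finset.sum_congr rfl fun q hq => ?_
        simp only [x, y]
        rw [ha q (Finset.mem_range.mp hq)]
        push_cast
        ring

theorem exists_coeff_recurrence {K : Type*} [Field K] [CharZero K] (N : K) (m : ℕ) :
    ∃ a : ℕ → K, a (m + 1) = 1 ∧ ∀ q < m, a (q + 1) * ((q + 1) * q - (m + 1) * m)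
      = a (q + 2) * ((q + 2) * (q + 1) * (N - (q + 1))) := by
  set c : ℕ → K := fun s => s * (s + 1) * (N - s) / (s * (s - 1) - (m + 1) * m)
  refine ⟨fun r => ∏ s ∈ Finset.Ico r (m + 1), c s, by simp, fun q hq => ?_⟩
  have hden : ((q : K) + 1) * q - (m + 1) * m ≠ 0 := by
    have : (q + 1) * q < (m + 1) * m := Nat.mul_lt_mul'' (by omega) hq
    rw [sub_ne_zero]
    exact_mod_cast this.ne
  dsimp only
  rw [Finset.prod_eq_prod_Ico_succ_bot (by omega : q + 1 < m + 1) c]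
  simp only [c]
  push_cast
  rw [add_sub_cancel_right, mul_right_comm, div_mul_cancel₀ _ hden]
  ring

theorem exists_monic_weightedLaplacian_eigenpoly {K : Type*} [Field K] [CharZero K] (N : K)
    (m : ℕ) :
    ∃ P : K[X], P.Monic ∧ P.natDegree = m + 1 ∧
      ∀ t, weightedLaplacian N P.eval t = (m + 1) * m * P.eval t := by
  obtain ⟨a, ha_top, ha_rec⟩ := exists_coeff_recurrence N m
  obtain ⟨hmonic, hdeg⟩ := monic_sum_smul_descPochhammer ha_top
  exact ⟨_, hmonic, hdeg, weightedLaplacian_sum_smul_descPochhammer N ha_rec⟩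

end Eigenpolynomial

section Cartan

def cartanA (L : ℕ) : Matrix (Fin L) (Fin L) ℝ :=
  Matrix.of fun i j =>
    if i = j then 2 else if i.val + 1 = j.val ∨ j.val + 1 = i.val then -1 else 0

def cartanAWeight (L : ℕ) (j : Fin L) : ℝ := ((j : ℕ) + 1) * (L - (j : ℕ))

variable {L : ℕ}

theorem cartanA_mulVec_apply (f : ℕ → ℝ) (h0 : f 0 = 0) (hL : f (L + 1) = 0) (i : Fin L) :
    (cartanA L *ᵥ fun j => f (j + 1)) i = 2 * f (i + 1) - f i - f (i + 2) := by
  obtain ⟨i, hi⟩ := i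
  have hterm : ∀ j : ℕ,
      (if i = j then 2 else if i + 1 = j ∨ j + 1 = i then -1 else 0) * f (j + 1)
      = 2 * (if i = j then f (j + 1) else 0) - (if i + 1 = j then f (i + 2) else 0)
        - (if i = j + 1 then f i else 0) := by
    intro j
    split_ifs <;> subst_vars <;> first | omega | ring
  have hprev : ∑ j ∈ Finset.range L, (if i = j + 1 then f i else 0) = f i := by
    cases i with
    | zero => simp [h0]
    | succ k => simp [show k < L by omega]
  have hnext : ∑ j ∈ Finset.range L, (if i + 1 = j then f (i + 2) else 0) = f (i + 2) := by
    rcases (by omega : i + 1 < L ∨ i + 1 = L) with h | h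
    · simp [h]
    · simp [h, show i + 2 = L + 1 by omega, hL]
  simp only [Matrix.mulVec, dotProduct, cartanA, Matrix.of_apply, Fin.ext_iff]
  rw [Fin.sum_univ_eq_sum_range
      (fun j => (if i = j then 2 else if i + 1 = j ∨ j + 1 = i then -1 else 0) * f (j + 1)),
    Finset.sum_congr rfl fun j _ => hterm j, Finset.sum_sub_distrib, Finset.sum_sub_distrib,
    ← Finset.mul_sum, hprev, hnext, Finset.sum_ite_eq]
  simp [hi]
  ring

theorem cartanAWeight_pos (j : Fin L) : 0 < cartanAWeight L j := by
  have : (j : ℝ) < L := by exact_mod_cast j.isLt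
  unfold cartanAWeight
  positivity

theorem diagonal_cartanAWeight_mul_cartanA_mulVec (g : ℝ → ℝ) (h0 : g 0 = 0)
    (hL : g (L + 1) = 0) :
    (Matrix.diagonal (cartanAWeight L) * cartanA L) *ᵥ
        (fun j : Fin L => g (((j : ℕ) : ℝ) + 1))
      = fun i : Fin L => weightedLaplacian ((L : ℝ) + 1) g (((i : ℕ) : ℝ) + 1) := by
  ext i
  have hrow := cartanA_mulVec_apply (fun m : ℕ => g m) (by simpa using h0) (by simpa using hL) i
  push_cast at hrow
  rw [← Matrix.mulVec_mulVec, Matrix.mulVec_diagonal, hrow, weightedLaplacian, cartanAWeight]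
  ring_nf

theorem isRoot_charpoly_diagonal_cartanAWeight_mul_cartanA (k : Fin L) :
    (Matrix.diagonal (cartanAWeight L) * cartanA L).charpoly.IsRoot
      (((k + 1) * (k + 2) : ℕ) : ℝ) := by
  obtain ⟨P, hmonic, hdeg, heig⟩ :=
    exists_monic_weightedLaplacian_eigenpoly ((L : ℝ) + 1) (k + 1)
  set μ : ℝ := (((k + 1) * (k + 2) : ℕ) : ℝ)
  have heig' : ∀ t, weightedLaplacian ((L : ℝ) + 1) P.eval t = μ * P.eval t := fun t => by
    rw [heig]
    push_cast [μ]
    ring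
  have hμ : μ ≠ 0 := by positivity
  have h0 : P.eval 0 = 0 := apply_eq_zero_of_weightedLaplacian_eq_mul hμ (heig' 0) (by ring)
  have hL : P.eval ((L : ℝ) + 1) = 0 :=
    apply_eq_zero_of_weightedLaplacian_eq_mul hμ (heig' _) (by ring)
  refine Matrix.isRoot_charpoly_of_mulVec_eq_smul
    (y := fun j : Fin L => P.eval (((j : ℕ) : ℝ) + 1)) ?_ ?_
  · intro hy
    refine hmonic.ne_zero (eq_zero_of_natDegree_lt_card_of_eval_eq_zero P
      (f := fun m : Fin (L + 2) => ((m : ℕ) : ℝ)) (Nat.cast_injective.comp Fin.val_injective)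
      (fun ⟨m, hm⟩ => ?_) (by simp [hdeg]))
    rcases m with _ | j
    · simpa using h0
    · rcases (by omega : j < L ∨ j = L) with hj | rfl
      · simpa using congrFun hy ⟨j, hj⟩
      · simpa using hL
  · rw [diagonal_cartanAWeight_mul_cartanA_mulVec (fun x => P.eval x) h0 hL]
    ext i
    simp [heig']

theorem charpoly_diagonal_cartanAWeight_mul_cartanA :
    (Matrix.diagonal (cartanAWeight L) * cartanA L).charpoly
      = ∏ j : Fin L, (X - C ((((j : ℕ) + 1) * ((j : ℕ) + 2) : ℕ) : ℝ)) := by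
  refine (Matrix.charpoly_monic _).eq_prod_X_sub_C_of_isRoot
    (by rw [Matrix.charpoly_natDegree_eq_dim]) (fun a b hab => Fin.ext ?_)
    isRoot_charpoly_diagonal_cartanAWeight_mul_cartanA
  have hab' : ((a : ℕ) + 1) * ((a : ℕ) + 2) = ((b : ℕ) + 1) * ((b : ℕ) + 2) := by
    exact_mod_cast hab
  nlinarith

theorem cartanA_mulVec_cartanAWeight : cartanA L *ᵥ cartanAWeight L = fun _ => 2 := by
  set f : ℕ → ℝ := fun m => m * (L + 1 - m)
  have hf : cartanAWeight L = fun j : Fin L => f ((j : ℕ) + 1) := by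
    funext j
    simp only [cartanAWeight, f]
    push_cast
    ring
  ext i
  rw [hf, cartanA_mulVec_apply f (by simp [f]) (by simp [f])]
  simp only [f]
  push_cast
  ring

theorem isUnit_cartanA : IsUnit (cartanA L) := by
  have h0 : (0 : ℝ) ∉ spectrum ℝ (Matrix.diagonal (cartanAWeight L) * cartanA L) := by
    rw [Matrix.spectrum_eq_range_of_charpoly_eq_prod charpoly_diagonal_cartanAWeight_mul_cartanA]
    rintro ⟨j, hj⟩
    dsimp only at hj
    exact_mod_cast hj
  rw [spectrum.zero_mem_iff, not_not] at h0
  exact isUnit_of_mul_isUnit_right h0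

theorem two_mul_sum_inv_cartanA (j : Fin L) :
    2 * ∑ k, (cartanA L)⁻¹ j k = cartanAWeight L j := by
  have hinv : (cartanA L)⁻¹ *ᵥ (cartanA L *ᵥ cartanAWeight L) = cartanAWeight L := by
    rw [Matrix.mulVec_mulVec, Matrix.nonsing_inv_mul _ ((Matrix.isUnit_iff_isUnit_det _).mp
      isUnit_cartanA), Matrix.one_mulVec]
  rw [cartanA_mulVec_cartanAWeight] at hinv
  rw [← congrFun hinv j]
  simp [Matrix.mulVec, dotProduct, Finset.sum_mul, mul_comm]

end Cartan

theorem cartan_AL_spectrum_general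
    (L : ℕ)
    (C : Matrix (Fin L) (Fin L) ℝ)
    (hC : ∀ i j : Fin L, C i j =
      if i = j then 2 else if i.val + 1 = j.val ∨ j.val + 1 = i.val then -1 else 0)
    (w : Fin L → ℝ) (hw : ∀ j, w j = 2 * ∑ k, C⁻¹ j k)
    (T : Matrix (Fin L) (Fin L) ℝ)
    (hT : ∀ i j, T i j = Real.sqrt (w i) * C i j * Real.sqrt (w j)) :
    (∀ j : Fin L, w j = ((j : ℕ) + 1) * (L - (j : ℕ))) ∧
    T.charpoly = ∏ j : Fin L, (X - Polynomial.C ((((j : ℕ) + 1) * ((j : ℕ) + 2) : ℕ) : ℝ)) ∧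
    spectrum ℝ T = {x : ℝ | ∃ j : Fin L, x = ((j : ℕ) + 1) * ((j : ℕ) + 2)} := by
  obtain rfl : C = cartanA L := Matrix.ext hC
  obtain rfl : w = cartanAWeight L := funext fun j => (hw j).trans (two_mul_sum_inv_cartanA j)
  set D := Matrix.diagonal fun j => √(cartanAWeight L j)
  have hTD : T = D * cartanA L * D := by
    ext i j
    simp [hT, D, Matrix.diagonal_mul, Matrix.mul_diagonal]
  have hDD : D * D = Matrix.diagonal (cartanAWeight L) := by
    simp [D, Real.mul_self_sqrt (cartanAWeight_pos _).le]
  have hchar :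
      T.charpoly = ∏ j : Fin L, (X - C ((((j : ℕ) + 1) * ((j : ℕ) + 2) : ℕ) : ℝ)) := by
    rw [hTD, Matrix.charpoly_mul_comm, ← mul_assoc, hDD,
      charpoly_diagonal_cartanAWeight_mul_cartanA]
  refine ⟨fun j => rfl, hchar, ?_⟩
  rw [Matrix.spectrum_eq_range_of_charpoly_eq_prod hchar]
  ext x
  simp [eq_comm]

/-- for the Cartan matrix `C` of type `A_L`, the constants
`w_j = 2 Σ_k (C⁻¹)_{jk}` equal `j(L+1−j)` (here `j = j₀+1` for the 0-indexed `j₀ : Fin L`),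
and the matrix `T` with `T_{ij} = √(w_i) C_{ij} √(w_j)` has characteristic polynomial
`∏_{j=1}^L (x − j(j+1))`; in particular its spectrum is `{j(j+1) : j = 1,…,L}`. -/
theorem cartan_AL_spectrum
    (L : ℕ) (hL : 1 ≤ L)
    (C : Matrix (Fin L) (Fin L) ℝ)
    (hC : ∀ i j : Fin L, C i j =
      if i = j then 2 else if i.val + 1 = j.val ∨ j.val + 1 = i.val then -1 else 0)
    (w : Fin L → ℝ) (hw : ∀ j, w j = 2 * ∑ k, C⁻¹ j k)
    (T : Matrix (Fin L) (Fin L) ℝ)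
    (hT : ∀ i j, T i j = Real.sqrt (w i) * C i j * Real.sqrt (w j)) :
    (∀ j : Fin L, w j = ((j : ℕ) + 1) * (L - (j : ℕ))) ∧
    T.charpoly = ∏ j : Fin L, (X - Polynomial.C ((((j : ℕ) + 1) * ((j : ℕ) + 2) : ℕ) : ℝ)) ∧
    spectrum ℝ T = {x : ℝ | ∃ j : Fin L, x = ((j : ℕ) + 1) * ((j : ℕ) + 2)} :=
  cartan_AL_spectrum_general L C hC w hw T hT
end
end
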